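/- arXiv:1612.07462 — 9 statements merged into one kernel-verified Lean document; each statement's English description precedes it below -/
import Mathlib

section
/- Let s be an even positive integer and n = 2s+2. If S is a 2-stable subset of [n] of cardinality s/2 + 1, then there exist a, a' in S with a - a' ∈ {s, s+1, s+2}. -/
/-!
Translate `S` so that its minimum `m` becomes `0` and reduce modulo `s + 1`. The stability bounds
`2 ≤ y - x ≤ 2s` together with the forbidden differences `s, s + 1, s + 2` say exactly that the
residues of distinct elements are at cyclic distance at least `2`, and the residue `s`, adjacent to
that of `m`, is never hit. So the residues are `2`-separated in `{0, …, s - 1}`, and halving them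
maps `S` injectively into `{0, …, s/2 - 1}`.
-/

/-- A subset `S` of `[n] = {1,…,n}` is `s`-stable if any two distinct elements
`i < j` of `S` satisfy `s ≤ j - i ≤ n - s`. -/
def IsStable (n s : ℕ) (S : Finset ℕ) : Prop :=
  ∀ i ∈ S, ∀ j ∈ S, i < j → s ≤ j - i ∧ j - i ≤ n - s

theorem Finset.card_le_of_two_separated {ι : Type*} [LinearOrder ι] (T : Finset ι) (f : ι → ℕ)
    (k : ℕ) (hlt : ∀ x ∈ T, f x < 2 * k)
    (hsep : ∀ x ∈ T, ∀ y ∈ T, x < y → f x + 2 ≤ f y ∨ f y + 2 ≤ f x) :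
    T.card ≤ k := by
  have hmaps : ∀ x ∈ T, f x / 2 ∈ range k := fun x hx => by
    have := hlt x hx
    rw [mem_range]
    omega
  have hinj : Set.InjOn (fun x => f x / 2) T := fun x hx y hy hxy => by
    simp only at hxy
    rcases lt_trichotomy x y with h | h | h
    · have := hsep x hx y hy h
      omega
    · exact h
    · have := hsep y hy x hx h
      omega
  simpa using card_le_card_of_injOn _ hmaps hinj

theorem Nat.mod_succ_eq_of_le_two_mul_add_one {d s : ℕ} (hd : d ≤ 2 * s + 1) :
    d % (s + 1) = if d < s + 1 then d else d - (s + 1) := by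
  split_ifs with h
  · exact Nat.mod_eq_of_lt h
  · rw [Nat.mod_eq_sub_mod (by omega), Nat.mod_eq_of_lt (by omega)]

theorem Nat.mod_succ_lt_of_le_two_mul {d s : ℕ} (hd : d ≤ 2 * s) (hne : d ≠ s) :
    d % (s + 1) < s := by
  rw [Nat.mod_succ_eq_of_le_two_mul_add_one (by omega)]
  split_ifs <;> omega

theorem Nat.mod_succ_two_separated {d e s : ℕ} (hde : d < e) (he : e ≤ 2 * s)
    (h2 : 2 ≤ e - d) (h₀ : e - d ≠ s) (h₁ : e - d ≠ s + 1) (h₂ : e - d ≠ s + 2) :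
    d % (s + 1) + 2 ≤ e % (s + 1) ∨ e % (s + 1) + 2 ≤ d % (s + 1) := by
  rw [Nat.mod_succ_eq_of_le_two_mul_add_one (d := d) (by omega),
    Nat.mod_succ_eq_of_le_two_mul_add_one (d := e) (by omega)]
  split_ifs <;> omega

theorem card_le_of_forall_sub_avoids {s : ℕ} (hs : 0 < s) (S : Finset ℕ)
    (hsub : ∀ x ∈ S, ∀ y ∈ S, x < y →
      2 ≤ y - x ∧ y - x ≤ 2 * s ∧ y - x ≠ s ∧ y - x ≠ s + 1 ∧ y - x ≠ s + 2) :
    S.card ≤ (s + 1) / 2 := by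
  rcases S.eq_empty_or_nonempty with rfl | hne
  · simp
  obtain ⟨m, hmS, hmin⟩ : ∃ m ∈ S, ∀ x ∈ S, m ≤ x := S.exists_min_image id hne
  have hoffset : ∀ x ∈ S, x - m ≤ 2 * s ∧ x - m ≠ s := fun x hx => by
    rcases (hmin x hx).eq_or_lt with rfl | hlt
    · omega
    · have := hsub m hmS x hx hlt
      omega
  refine S.card_le_of_two_separated (fun x => (x - m) % (s + 1)) _ (fun x hx => ?_) ?_
  · have := Nat.mod_succ_lt_of_le_two_mul (hoffset x hx).1 (hoffset x hx).2
    omega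
  · intro x hx y hy hxy
    have hmx := hmin x hx
    have hdiff : y - m - (x - m) = y - x := by omega
    obtain ⟨h2, -, h₀, h₁, h₂⟩ := hsub x hx y hy hxy
    exact Nat.mod_succ_two_separated (by omega) (hoffset y hy).1
      (hdiff ▸ h2) (hdiff ▸ h₀) (hdiff ▸ h₁) (hdiff ▸ h₂)

theorem two_stable_subset_has_close_pair_general (s : ℕ) (hse : Even s)
    (S : Finset ℕ)
    (hstab : IsStable (2 * s + 2) 2 S) (hcard : S.card = s / 2 + 1) :
    ∃ a ∈ S, ∃ a' ∈ S, a - a' = s ∨ a - a' = s + 1 ∨ a - a' = s + 2 := by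
  by_contra! hcon
  obtain ⟨a, ha⟩ : S.Nonempty := Finset.card_pos.mp (by omega)
  have hs : 0 < s := by
    have := (hcon a ha a ha).1
    omega
  have hle := card_le_of_forall_sub_avoids hs S fun x hx y hy hxy => by
    have := hstab x hx y hy hxy
    have := hcon y hy x hx
    omega
  obtain ⟨t, rfl⟩ := hse
  omega

theorem two_stable_subset_has_close_pair (s : ℕ) (hs : 0 < s) (hse : Even s)
    (S : Finset ℕ) (hSsub : S ⊆ Finset.Icc 1 (2 * s + 2))
    (hstab : IsStable (2 * s + 2) 2 S) (hcard : S.card = s / 2 + 1) :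
    ∃ a ∈ S, ∃ a' ∈ S, a - a' = s ∨ a - a' = s + 1 ∨ a - a' = s + 2 :=
  two_stable_subset_has_close_pair_general s hse S hstab hcard
end

section
/- Let k, n be positive integers and s an even positive integer with n ≥ (s+2)k - 2. If S is a 2-stable subset of [n] of cardinality (s/2)(k-1) + 1, then S contains an s-stable subset of cardinality k. -/
open Finset Function

section Iterate

variable {f : ℕ → ℕ}

theorem apply_add_mul_of_apply_add {m n : ℕ} (h : ∀ x, f (x + m) = f x + n) (c x : ℕ) :
    f (x + c * m) = f x + c * n := by
  induction c with
  | zero => simp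
  | succ c ih => rw [add_one_mul, ← add_assoc, h, ih, add_one_mul, add_assoc]

theorem iterate_add_mul_of_apply_add {m : ℕ} (h : ∀ x, f (x + m) = f x + m) (r c x : ℕ) :
    f^[r] (x + c * m) = f^[r] x + c * m := by
  induction r generalizing x with
  | zero => rfl
  | succ r ih => rw [iterate_succ_apply, iterate_succ_apply, apply_add_mul_of_apply_add h, ih]

theorem iterate_le_add_mul {d : ℕ} (h : ∀ x, f x ≤ x + d) (r x : ℕ) : f^[r] x ≤ x + r * d := by
  induction r with
  | zero => simp
  | succ r ih => rw [iterate_succ_apply', add_one_mul]; linarith [h (f^[r] x)]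

theorem add_mul_le_iterate {d : ℕ} (h : ∀ x, x + d ≤ f x) (r x : ℕ) : x + r * d ≤ f^[r] x := by
  induction r with
  | zero => simp
  | succ r ih => rw [iterate_succ_apply', add_one_mul]; linarith [h (f^[r] x)]

theorem exists_iterate_eq_add_mul {m : ℕ} (hm : 0 < m) (hf : id ≤ f) :
    ∃ u ℓ w, 0 < ℓ ∧ f^[ℓ] u = u + w * m ∧
      ∀ i j, i < j → j < i + ℓ → f^[i] u % m ≠ f^[j] u % m := by
  classical
  set g : ℕ → ℕ := fun j => f^[j] 0 % m
  have hrep : ∃ d, 0 < d ∧ ∃ a, g a = g (a + d) := by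
    obtain ⟨a, b, hab, h⟩ :=
      (Set.finite_Iio m).exists_lt_map_eq_of_forall_mem (f := g) fun j => Nat.mod_lt _ hm
    exact ⟨b - a, by omega, a, by rwa [Nat.add_sub_cancel' hab.le]⟩
  obtain ⟨hℓ, a, ha⟩ := Nat.find_spec hrep
  have hle : f^[a] 0 ≤ f^[Nat.find hrep] (f^[a] 0) := id_le_iterate_of_id_le hf _ _
  rw [← iterate_add_apply, add_comm] at hle
  obtain ⟨w, hw⟩ := (Nat.modEq_iff_dvd' hle).mp ha
  refine ⟨f^[a] 0, Nat.find hrep, w, hℓ, ?_, fun i j hij hji hres => ?_⟩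
  · rw [← iterate_add_apply, add_comm, mul_comm, ← hw, Nat.add_sub_cancel' hle]
  · refine Nat.find_min hrep (show j - i < Nat.find hrep by omega) ⟨by omega, a + i, ?_⟩
    simp only [g, ← iterate_add_apply, add_comm _ a] at hres ⊢
    rwa [add_assoc, Nat.add_sub_cancel' hij.le]

end Iterate

/-- The greedy step: the first index whose `p`-value exceeds `p x` by at least `s`
(junk value `0` if there is none). -/
noncomputable def jump (p : ℕ → ℕ) (s x : ℕ) : ℕ := sInf {j | p x + s ≤ p j}

def gap (p : ℕ → ℕ) (y : ℕ) : ℕ := p (y + 1) - p y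

section Jump

variable {p : ℕ → ℕ} {m n s : ℕ}

theorem add_mul_le_apply_add {d : ℕ} (hstep : ∀ x, p x + d ≤ p (x + 1)) (c x : ℕ) :
    p x + c * d ≤ p (x + c) := by
  induction c with
  | zero => simp
  | succ c ih => rw [add_one_mul, ← add_assoc x]; linarith [hstep (x + c)]

theorem apply_add_le_apply_jump (hp : StrictMono p) (x : ℕ) : p x + s ≤ p (jump p s x) :=
  Nat.sInf_mem (s := {j | p x + s ≤ p j})
    ⟨s + x, by rw [Set.mem_ofPred_eq, add_comm (p x)]; exact hp.add_le_nat s x⟩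

theorem jump_le {x j : ℕ} (h : p x + s ≤ p j) : jump p s x ≤ j := Nat.sInf_le h

theorem lt_add_of_lt_jump {x j : ℕ} (h : j < jump p s x) : p j < p x + s :=
  not_le.mp (Nat.notMem_of_lt_sInf (s := {j | p x + s ≤ p j}) h)

theorem lt_jump (hs : 0 < s) (hp : StrictMono p) (x : ℕ) : x < jump p s x := by
  by_contra! h
  linarith [hp.monotone h, apply_add_le_apply_jump (s := s) hp x]

theorem jump_add (hp : StrictMono p) (hper : ∀ x, p (x + m) = p x + n) (x : ℕ) :
    jump p s (x + m) = jump p s x + m := by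
  refine le_antisymm (jump_le ?_) (not_lt.mp fun h => ?_)
  · rw [hper, hper]; linarith [apply_add_le_apply_jump (s := s) hp x]
  have hj := apply_add_le_apply_jump (s := s) hp (x + m)
  rw [hper] at hj
  rcases lt_or_ge (jump p s (x + m)) m with hjm | hjm
  · have h1 : p (jump p s (x + m)) < p (x + m) := hp (by omega)
    linarith [hper x]
  · have h1 := lt_add_of_lt_jump (s := s) (show jump p s (x + m) - m < jump p s x by omega)
    have h2 := hper (jump p s (x + m) - m)
    rw [Nat.sub_add_cancel hjm] at h2
    linarith

theorem jump_le_add {t : ℕ} (hstep : ∀ x, p x + 2 ≤ p (x + 1)) (x : ℕ) :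
    jump p (2 * t) x ≤ x + t :=
  jump_le (by linarith [add_mul_le_apply_add hstep t x])

theorem apply_jump_add_one_le (hs : 0 < s) (hp : StrictMono p) (x : ℕ) :
    p (jump p s x) + 1 ≤ p x + s + gap p (jump p s x - 1) := by
  have hx := lt_jump hs hp x
  have h1 := lt_add_of_lt_jump (s := s) (show jump p s x - 1 < jump p s x by omega)
  have h2 : p (jump p s x - 1) ≤ p (jump p s x) := hp.monotone (by omega)
  have h3 : jump p s x - 1 + 1 = jump p s x := by omega
  simp only [gap, h3]
  omega

theorem apply_iterate_jump_add_le (hs : 0 < s) (hp : StrictMono p) (u j : ℕ) :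
    p ((jump p s)^[j] u) + j ≤
      p u + j * s + ∑ i ∈ range j, gap p ((jump p s)^[i + 1] u - 1) := by
  induction j with
  | zero => simp
  | succ j ih =>
    rw [sum_range_succ, iterate_succ_apply', add_one_mul]
    linarith [apply_jump_add_one_le hs hp ((jump p s)^[j] u)]

end Jump

section Gap

variable {p : ℕ → ℕ} {m n : ℕ}

theorem sum_gap_add_two_mul_le (hstep : ∀ x, p x + 2 ≤ p (x + 1))
    (hper : ∀ x, p (x + m) = p x + n) (hm : 0 < m) {ℓ : ℕ} {z : ℕ → ℕ}
    (hz : Set.InjOn (fun i => z i % m) (range ℓ)) :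
    ∑ i ∈ range ℓ, gap p (z i) + 2 * m ≤ n + 2 * ℓ := by
  have hp : Monotone p := monotone_nat_of_le_succ fun x => by linarith [hstep x]
  have hperiodic (y : ℕ) : gap p y = gap p (y % m) := by
    conv_lhs => rw [← Nat.mod_add_div' y m]
    simp only [gap]
    rw [add_right_comm, apply_add_mul_of_apply_add hper, apply_add_mul_of_apply_add hper]
    omega
  set R := (range ℓ).image (fun i => z i % m)
  have hR : R ⊆ range m := image_subset_iff.mpr fun i _ => mem_range.mpr (Nat.mod_lt _ hm)
  have hcard : R.card = ℓ := by rw [card_image_of_injOn hz, card_range]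
  have hℓm : ℓ ≤ m := by simpa [hcard] using card_le_card hR
  have hrest : 2 * (m - ℓ) ≤ ∑ r ∈ range m \ R, gap p r := by
    have := card_nsmul_le_sum (range m \ R) (gap p) 2 fun r _ => by
      have := hstep r; simp only [gap]; omega
    rwa [card_sdiff_of_subset hR, card_range, hcard, smul_eq_mul, mul_comm] at this
  have htotal : ∑ r ∈ range m, gap p r = n := by
    have h0 := hper 0
    rw [zero_add] at h0
    simp only [gap]
    rw [sum_range_tsub hp, h0, Nat.add_sub_cancel_left]
  calc ∑ i ∈ range ℓ, gap p (z i) + 2 * m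
      = ∑ r ∈ R, gap p r + 2 * m := by
        rw [sum_image hz]; simp only [← hperiodic]
    _ ≤ ∑ r ∈ R, gap p r + ∑ r ∈ range m \ R, gap p r + 2 * ℓ := by omega
    _ = n + 2 * ℓ := by rw [add_comm (∑ r ∈ R, _), sum_sdiff hR, htotal]

end Gap

theorem exists_iterate_jump_le {p : ℕ → ℕ} {m n t K : ℕ}
    (hstep : ∀ x, p x + 2 ≤ p (x + 1)) (hper : ∀ x, p (x + m) = p x + n)
    (ht : 0 < t) (hK : 0 < K) (hm : m = t * K + 1) (hn : (2 * t + 2) * (K + 1) ≤ n + 2) :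
    ∃ x, (jump p (2 * t))^[K + 1] x ≤ x + m := by
  by_contra! hfar
  have hp : StrictMono p := strictMono_nat_of_lt_succ fun x => by linarith [hstep x]
  have hs : 0 < 2 * t := by omega
  have hm0 : 0 < m := by omega
  obtain ⟨u, ℓ, w, hℓ, hw, hres⟩ :=
    exists_iterate_eq_add_mul hm0 fun x => (lt_jump hs hp x).le
  have hidx : w * m ≤ ℓ * t := by
    have := iterate_le_add_mul (jump_le_add (t := t) hstep) ℓ u
    omega
  have hrot : ℓ * (m + 1) ≤ (K + 1) * w * m := by
    have hcycle (c : ℕ) : (jump p (2 * t))^[ℓ * c] u = u + c * w * m := by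
      induction c with
      | zero => simp
      | succ c ih =>
        rw [mul_add_one, add_comm, iterate_add_apply, ih,
          iterate_add_mul_of_apply_add (jump_add hp hper), hw]
        ring
    have := add_mul_le_iterate (f := (jump p (2 * t))^[K + 1]) (d := m + 1) hfar ℓ u
    rw [← iterate_mul, mul_comm (K + 1), hcycle] at this
    omega
  have hlen : w * n + 2 * m ≤ ℓ * (2 * t + 1) + n := by
    have hinj : Set.InjOn (fun i => ((jump p (2 * t))^[i + 1] u - 1) % m) (range ℓ) := by
      intro i hi j hj hij
      have hpos (r : ℕ) : 0 < (jump p (2 * t))^[r + 1] u := by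
        rw [iterate_succ_apply']
        exact (Nat.zero_le _).trans_lt (lt_jump hs hp _)
      have hmod := Nat.ModEq.add_right 1 hij
      rw [Nat.sub_add_cancel (hpos i), Nat.sub_add_cancel (hpos j)] at hmod
      simp only [coe_range, Set.mem_Iio] at hi hj
      by_contra hne
      rcases lt_or_gt_of_ne hne with h | h
      · exact hres (i + 1) (j + 1) (by omega) (by omega) hmod
      · exact hres (j + 1) (i + 1) (by omega) (by omega) hmod.symm
    have h1 := apply_iterate_jump_add_le hs hp u ℓ
    have h2 := sum_gap_add_two_mul_le hstep hper hm0 hinj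
    rw [hw, apply_add_mul_of_apply_add hper] at h1
    nlinarith
  have hℓw : ℓ + 1 ≤ (K + 1) * w := by
    have : ℓ * m < (K + 1) * w * m := by nlinarith
    exact Nat.lt_of_mul_lt_mul_right this
  have hw2 : 2 ≤ w := by
    subst hm
    nlinarith
  subst hm
  -- with these products the bounds reduce to `(K - 1) (w - 2) + 1 ≤ 0`
  nlinarith [Nat.mul_le_mul_right (2 * t + 1) hℓw, Nat.mul_le_mul_right (w - 1) hn,
    Nat.mul_le_mul (show 1 ≤ K by omega) (show 2 ≤ w from hw2)]

theorem isStable_of_card_le_one {n s : ℕ} {T : Finset ℕ} (hT : T.card ≤ 1) : IsStable n s T :=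
  fun i hi j hj hij => absurd (card_le_one.mp hT i hi j hj) hij.ne

theorem isStable_image_range {n s K : ℕ} {f : ℕ → ℕ}
    (hf : ∀ r r', r < r' → r' ≤ K → f r ≠ f r' ∧ IsStable n s {f r, f r'}) :
    ((range (K + 1)).image f).card = K + 1 ∧ IsStable n s ((range (K + 1)).image f) := by
  have hpair : ∀ r ∈ range (K + 1), ∀ r' ∈ range (K + 1), r ≠ r' →
      f r ≠ f r' ∧ IsStable n s {f r, f r'} := by
    intro r hr r' hr' hne
    simp only [mem_range] at hr hr'
    rcases lt_or_gt_of_ne hne with h | h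
    · exact hf r r' h (by omega)
    · rw [pair_comm]; exact (hf r' r h (by omega)).imp Ne.symm id
  refine ⟨by rw [card_image_of_injOn fun r hr r' hr' => not_imp_not.mp fun hne =>
    (hpair r hr r' hr' hne).1, card_range], ?_⟩
  intro i hi j hj hij
  obtain ⟨r, hr, rfl⟩ := mem_image.mp hi
  obtain ⟨r', hr', rfl⟩ := mem_image.mp hj
  exact (hpair r hr r' hr' (by rintro rfl; exact hij.ne rfl)).2 _ (by simp) _ (by simp) hij

/-- Unrolls the cyclic sequence `q 0, …, q (m - 1)` on a circle of length `n` into a sequence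
on `ℕ`, lap `c` being shifted by `c * n`. -/
def periodicLift (q : ℕ → ℕ) (m n x : ℕ) : ℕ := q (x % m) + x / m * n

section PeriodicLift

variable {q : ℕ → ℕ} {m n : ℕ}

theorem periodicLift_add_mul {r : ℕ} (hr : r < m) (c : ℕ) :
    periodicLift q m n (r + c * m) = q r + c * n := by
  have hm : 0 < m := by omega
  simp [periodicLift, Nat.add_mul_mod_self_right, Nat.mod_eq_of_lt hr,
    Nat.add_mul_div_right _ _ hm, Nat.div_eq_of_lt hr]

theorem periodicLift_add (hm : 0 < m) (x : ℕ) :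
    periodicLift q m n (x + m) = periodicLift q m n x + n := by
  simp only [periodicLift, Nat.add_mod_right, Nat.add_div_right _ hm, add_one_mul, add_assoc]

theorem periodicLift_add_le_succ {d : ℕ} (hm : 0 < m) (hq : ∀ i, i + 1 < m → q i + d ≤ q (i + 1))
    (hwrap : q (m - 1) + d ≤ q 0 + n) (x : ℕ) :
    periodicLift q m n x + d ≤ periodicLift q m n (x + 1) := by
  obtain ⟨r, c, hr, rfl⟩ : ∃ r c, r < m ∧ x = r + c * m :=
    ⟨x % m, x / m, Nat.mod_lt x hm, (Nat.mod_add_div' x m).symm⟩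
  rw [periodicLift_add_mul hr, add_right_comm r]
  rcases lt_or_ge (r + 1) m with h | h
  · rw [periodicLift_add_mul h]
    linarith [hq r h]
  · rw [show r + 1 = m by omega, ← one_add_mul, ← zero_add (_ * m), periodicLift_add_mul hm,
      show r = m - 1 by omega]
    linarith

theorem periodicLift_isStable_pair {s a b : ℕ} (hs : 0 < s) (hab : a < b) (hba : b < a + m)
    (h₁ : periodicLift q m n a + s ≤ periodicLift q m n b)
    (h₂ : periodicLift q m n b + s ≤ periodicLift q m n a + n) :
    q (a % m) ≠ q (b % m) ∧ IsStable n s {q (a % m), q (b % m)} := by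
  have hm : 0 < m := by omega
  have hlap₁ : a / m ≤ b / m := Nat.div_le_div_right hab.le
  have hlap₂ : b / m ≤ a / m + 1 := by
    rw [← Nat.add_div_right _ hm]; exact Nat.div_le_div_right hba.le
  simp only [periodicLift] at h₁ h₂
  obtain hlap | hlap : b / m = a / m ∨ b / m = a / m + 1 := by omega
  all_goals
    rw [hlap] at h₁ h₂
    try rw [add_one_mul] at h₁ h₂
    refine ⟨by omega, ?_⟩
    simp only [IsStable, mem_insert, mem_singleton]
    rintro i (rfl | rfl) j (rfl | rfl) hij <;> omega

end PeriodicLift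

theorem iterate_jump_window {p : ℕ → ℕ} {m n s K x r r' : ℕ} (hs : 0 < s) (hp : StrictMono p)
    (hper : ∀ x, p (x + m) = p x + n) (hx : (jump p s)^[K + 1] x ≤ x + m) (hr : r < r')
    (hr' : r' ≤ K) :
    (jump p s)^[r] x < (jump p s)^[r'] x ∧ (jump p s)^[r'] x < (jump p s)^[r] x + m ∧
      p ((jump p s)^[r] x) + s ≤ p ((jump p s)^[r'] x) ∧
      p ((jump p s)^[r'] x) + s ≤ p ((jump p s)^[r] x) + n := by
  have horbit : StrictMono fun j => (jump p s)^[j] x :=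
    strictMono_nat_of_lt_succ fun j => by
      simp only [iterate_succ_apply']; exact lt_jump hs hp _
  have hstep (j : ℕ) : p ((jump p s)^[j] x) + s ≤ p ((jump p s)^[j + 1] x) := by
    rw [iterate_succ_apply']; exact apply_add_le_apply_jump hp _
  have h₁ := hp.monotone (horbit.monotone (show r + 1 ≤ r' by omega))
  have h₂ := hp.monotone (horbit.monotone hr')
  have h₃ := hp.monotone hx
  have h₄ := hp.monotone (horbit.monotone (Nat.zero_le r))
  have h₅ : (jump p s)^[r'] x < (jump p s)^[K + 1] x := horbit (show r' < K + 1 by omega)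
  have h₆ := horbit.monotone (Nat.zero_le r)
  simp only [iterate_zero_apply] at h₄ h₆
  refine ⟨horbit hr, by omega, by linarith [hstep r], by linarith [hstep K, hper x]⟩

theorem IsStable.le_nth_sub_nth {n d : ℕ} {S : Finset ℕ} (hS : IsStable n d S) {i j : ℕ}
    (hij : i < j) (hj : j < S.card) :
    d ≤ Nat.nth (· ∈ S) j - Nat.nth (· ∈ S) i ∧
      Nat.nth (· ∈ S) j - Nat.nth (· ∈ S) i ≤ n - d := by
  have hcard : j < S.finite_toSet.toFinset.card := by simpa using hj
  exact hS _ (Nat.nth_mem_of_lt_card S.finite_toSet (hij.trans hcard)) _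
    (Nat.nth_mem_of_lt_card S.finite_toSet hcard)
    (Nat.nth_lt_nth_of_lt_card S.finite_toSet hij hcard)

theorem two_stable_contains_s_stable_general (n k s : ℕ) (hs : 0 < s) (hse : Even s)
    (hbig : (s + 2) * k - 2 ≤ n)
    (S : Finset ℕ) (hstab : IsStable n 2 S)
    (hcard : S.card = s / 2 * (k - 1) + 1) :
    ∃ T ⊆ S, T.card = k ∧ IsStable n s T := by
  obtain ⟨t, rfl⟩ := hse.two_dvd
  rcases le_or_gt k 1 with hk | hk
  · obtain ⟨T, hTS, hT⟩ := exists_subset_card_eq (show k ≤ S.card by omega)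
    exact ⟨T, hTS, hT, isStable_of_card_le_one (by omega)⟩
  obtain ⟨K, rfl⟩ : ∃ K, k = K + 1 := ⟨k - 1, by omega⟩
  have hm : S.card = t * K + 1 := by rw [hcard]; simp
  have htK : 0 < t * K := Nat.mul_pos (by omega) (by omega)
  set p := periodicLift (Nat.nth (· ∈ S)) S.card n
  have hstep : ∀ x, p x + 2 ≤ p (x + 1) := by
    refine periodicLift_add_le_succ (by omega) (fun i hi => ?_) ?_
    · have := hstab.le_nth_sub_nth (lt_add_one i) hi; omega
    · have := hstab.le_nth_sub_nth (show 0 < S.card - 1 by omega) (by omega); omega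
  have hp : StrictMono p := strictMono_nat_of_lt_succ fun x => by linarith [hstep x]
  obtain ⟨x, hx⟩ := exists_iterate_jump_le hstep (periodicLift_add (by omega)) (by omega)
    (by omega) hm (by omega)
  obtain ⟨hTcard, hT⟩ := isStable_image_range (K := K)
    (f := fun r => Nat.nth (· ∈ S) ((jump p (2 * t))^[r] x % S.card)) fun r r' hr hr' => by
      obtain ⟨h₁, h₂, h₃, h₄⟩ :=
        iterate_jump_window hs hp (periodicLift_add (by omega)) hx hr hr'
      exact periodicLift_isStable_pair hs h₁ h₂ h₃ h₄
  refine ⟨_, image_subset_iff.mpr fun r _ => ?_, hTcard, hT⟩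
  exact Nat.nth_mem_of_lt_card S.finite_toSet (by simpa using Nat.mod_lt _ (by omega))

theorem two_stable_contains_s_stable (n k s : ℕ) (hn : 0 < n) (hk : 0 < k)
    (hs : 0 < s) (hse : Even s) (hbig : (s + 2) * k - 2 ≤ n)
    (S : Finset ℕ) (hSsub : S ⊆ Finset.Icc 1 n) (hstab : IsStable n 2 S)
    (hcard : S.card = s / 2 * (k - 1) + 1) :
    ∃ T ⊆ S, T.card = k ∧ IsStable n s T :=
  two_stable_contains_s_stable_general n k s hs hse hbig S hstab hcard
end

section
/- Let n, k be positive integers and s a positive integer with n ≥ sk. For each i ∈ [n], the number of s-stable k-subsets of [n] containing i equals C(n - k(s-1) - 1, k-1). -/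
open Finset

def Separated (s : ℕ) (T : Finset ℕ) : Prop :=
  ∀ a ∈ T, ∀ b ∈ T, a < b → a + s ≤ b

instance (s : ℕ) : DecidablePred (Separated s) := fun _ => by unfold Separated; infer_instance

namespace Separated

variable {s : ℕ} {T : Finset ℕ}

theorem mono {U : Finset ℕ} (h : Separated s T) (hUT : U ⊆ T) : Separated s U :=
  fun a ha b hb hab => h a (hUT ha) b (hUT hb) hab

theorem insert (h : Separated s T) {x : ℕ} (hx : ∀ b ∈ T, b + s ≤ x) :
    Separated s (insert x T) := by
  intro a ha b hb hab
  rcases mem_insert.mp ha with ha | ha <;> rcases mem_insert.mp hb with hb | hb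
  · omega
  · have := hx b hb; omega
  · have := hx a ha; omega
  · exact h a ha b hb hab

end Separated

def separatedSubsets (s a L j : ℕ) : Finset (Finset ℕ) :=
  ((Ico a (a + L)).powersetCard j).filter (Separated s)

theorem mem_separatedSubsets {s a L j : ℕ} {T : Finset ℕ} :
    T ∈ separatedSubsets s a L j ↔ T ⊆ Ico a (a + L) ∧ T.card = j ∧ Separated s T := by
  rw [separatedSubsets, mem_filter, mem_powersetCard, and_assoc]

section SeparatedSubsets

variable {s : ℕ} (a L j : ℕ)

theorem filter_notMem_separatedSubsets_succ :
    (separatedSubsets s a (L + 1) j).filter (a + L ∉ ·) = separatedSubsets s a L j := by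
  ext T
  simp only [mem_filter, mem_separatedSubsets, subset_iff, mem_Ico]
  constructor
  · rintro ⟨⟨hT, hcard, hsep⟩, htop⟩
    refine ⟨fun x hx => ?_, hcard, hsep⟩
    have := hT hx
    have : x ≠ a + L := fun h => htop (h ▸ hx)
    omega
  · rintro ⟨hT, hcard, hsep⟩
    refine ⟨⟨fun x hx => ?_, hcard, hsep⟩, fun h => ?_⟩
    · have := hT hx; omega
    · have := hT h; omega

theorem card_filter_mem_separatedSubsets_succ (hs : 0 < s) :
    #((separatedSubsets s a (L + 1) (j + 1)).filter (a + L ∈ ·)) =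
      #(separatedSubsets s a (L + 1 - s) j) := by
  apply card_nbij' (·.erase (a + L)) (insert (a + L))
  · intro T hT
    simp only [mem_coe, mem_filter, mem_separatedSubsets] at hT ⊢
    obtain ⟨⟨hT, hcard, hsep⟩, htop⟩ := hT
    refine ⟨fun x hx => ?_, by rw [card_erase_of_mem htop, hcard]; rfl,
      hsep.mono (erase_subset _ _)⟩
    obtain ⟨hxt, hx⟩ := mem_erase.mp hx
    have := mem_Ico.mp (hT hx)
    have := hsep x hx _ htop (by omega)
    exact mem_Ico.mpr (by omega)
  · intro T hT
    simp only [mem_coe, mem_filter, mem_separatedSubsets] at hT ⊢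
    obtain ⟨hT, hcard, hsep⟩ := hT
    have hlt : ∀ b ∈ T, b + s ≤ a + L := fun b hb => by have := mem_Ico.mp (hT hb); omega
    have hnot : a + L ∉ T := fun h => by have := hlt _ h; omega
    refine ⟨⟨insert_subset (mem_Ico.mpr (by omega)) fun x hx => ?_, ?_, hsep.insert hlt⟩,
      mem_insert_self _ _⟩
    · have := mem_Ico.mp (hT hx); exact mem_Ico.mpr (by omega)
    · rw [card_insert_of_notMem hnot, hcard]
  · intro T hT
    exact insert_erase (mem_filter.mp hT).2
  · intro T hT
    refine erase_insert fun h => ?_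
    have := mem_Ico.mp ((mem_separatedSubsets.mp hT).1 h)
    omega

theorem card_separatedSubsets_succ_succ (hs : 0 < s) :
    #(separatedSubsets s a (L + 1) (j + 1)) =
      #(separatedSubsets s a L (j + 1)) + #(separatedSubsets s a (L + 1 - s) j) := by
  rw [← card_filter_add_card_filter_not (a + L ∈ ·), add_comm,
    card_filter_mem_separatedSubsets_succ a L j hs]
  simp only [filter_notMem_separatedSubsets_succ]

end SeparatedSubsets

theorem choose_succ_sub_mul_eq_add {s : ℕ} (hs : 0 < s) (L j : ℕ) :
    (L + 1 - j * (s - 1)).choose (j + 1) =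
      (L - j * (s - 1)).choose (j + 1) + (L + 1 - s - (j - 1) * (s - 1)).choose j := by
  rcases j with _ | j
  · simp
  have hmul : (j + 1) * (s - 1) = j * (s - 1) + (s - 1) := add_one_mul _ _
  rw [Nat.add_sub_cancel]
  rcases le_or_gt ((j + 1) * (s - 1)) L with hL | hL
  · obtain ⟨m, rfl⟩ := Nat.exists_eq_add_of_le' hL
    rw [show m + (j + 1) * (s - 1) + 1 - (j + 1) * (s - 1) = m + 1 by omega,
      show m + (j + 1) * (s - 1) - (j + 1) * (s - 1) = m by omega,
      show m + (j + 1) * (s - 1) + 1 - s - j * (s - 1) = m by omega,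
      Nat.choose_succ_succ', add_comm]
  · rw [Nat.choose_eq_zero_of_lt (by omega), Nat.choose_eq_zero_of_lt (by omega),
      Nat.choose_eq_zero_of_lt (by omega)]

theorem card_separatedSubsets {s : ℕ} (hs : 0 < s) (a L j : ℕ) :
    #(separatedSubsets s a L j) = (L - (j - 1) * (s - 1)).choose j := by
  induction L using Nat.strong_induction_on generalizing j with
  | _ L ih =>
  rcases j with _ | j
  · rw [separatedSubsets, powersetCard_zero, filter_singleton, if_pos (by simp [Separated])]
    simp
  rcases L with _ | L
  · simp [separatedSubsets]
  rw [card_separatedSubsets_succ_succ a L j hs, ih L (by omega), ih (L + 1 - s) (by omega),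
    Nat.add_sub_cancel, choose_succ_sub_mul_eq_add hs]

/-- Rotation of `[n]` by `t`: `a ↦ a + t`, read modulo `n` with representatives in `[1, n]`. -/
def rotate (n t a : ℕ) : ℕ := if a + t ≤ n then a + t else a + t - n

section Rotation

variable {n t : ℕ}

theorem rotate_mem_Icc (ht : t ≤ n) {a : ℕ} (ha : a ∈ Icc 1 n) : rotate n t a ∈ Icc 1 n := by
  rw [mem_Icc] at ha ⊢; unfold rotate; split_ifs <;> omega

theorem rotate_rotate {u : ℕ} (htu : t + u = n) {a : ℕ} (ha : a ∈ Icc 1 n) :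
    rotate n u (rotate n t a) = a := by
  rw [mem_Icc] at ha; unfold rotate; split_ifs <;> omega

theorem image_rotate_image_rotate {u : ℕ} (htu : t + u = n) {A : Finset ℕ} (hA : A ⊆ Icc 1 n) :
    (A.image (rotate n t)).image (rotate n u) = A := by
  rw [image_image]
  exact (image_congr fun a ha => rotate_rotate htu (hA ha)).trans image_id

theorem injOn_rotate (ht : t ≤ n) : Set.InjOn (rotate n t) (Icc 1 n) :=
  Set.LeftInvOn.injOn (f₁' := rotate n (n - t)) fun _ ha => rotate_rotate (by omega) ha

theorem IsStable.image_rotate {s : ℕ} {A : Finset ℕ} (h : IsStable n s A) (hA : A ⊆ Icc 1 n) :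
    IsStable n s (A.image (rotate n t)) := by
  simp only [IsStable, mem_image]
  rintro _ ⟨a, ha, rfl⟩ _ ⟨b, hb, rfl⟩ hlt
  have := mem_Icc.mp (hA ha)
  have := mem_Icc.mp (hA hb)
  unfold rotate at hlt ⊢
  rcases lt_trichotomy a b with hab | rfl | hab
  · have := h a ha b hb hab; split_ifs at hlt ⊢ <;> omega
  · omega
  · have := h b hb a ha hab; split_ifs at hlt ⊢ <;> omega

theorem image_rotate_mem {k s i : ℕ} (ht : t ≤ n) {A : Finset ℕ}
    (hA : A ⊆ Icc 1 n ∧ A.card = k ∧ IsStable n s A ∧ i ∈ A) :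
    A.image (rotate n t) ⊆ Icc 1 n ∧ (A.image (rotate n t)).card = k ∧
      IsStable n s (A.image (rotate n t)) ∧ rotate n t i ∈ A.image (rotate n t) := by
  obtain ⟨hsub, hcard, hst, hi⟩ := hA
  refine ⟨fun _ hx => ?_, ?_, hst.image_rotate hsub, mem_image_of_mem _ hi⟩
  · obtain ⟨a, ha, rfl⟩ := mem_image.mp hx
    exact rotate_mem_Icc ht (hsub ha)
  · rw [card_image_of_injOn ((injOn_rotate ht).mono (coe_subset.mpr hsub)), hcard]

theorem card_stable_containing_rotate {k s i u : ℕ} (htu : t + u = n) (hi : i ∈ Icc 1 n) :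
    Nat.card {A : Finset ℕ // A ⊆ Icc 1 n ∧ A.card = k ∧ IsStable n s A ∧ i ∈ A} =
      Nat.card {A : Finset ℕ //
        A ⊆ Icc 1 n ∧ A.card = k ∧ IsStable n s A ∧ rotate n t i ∈ A} :=
  Nat.card_congr
    { toFun := fun A => ⟨A.1.image (rotate n t), image_rotate_mem (by omega) A.2⟩
      invFun := fun B => ⟨B.1.image (rotate n u), by
        simpa only [rotate_rotate htu hi] using image_rotate_mem (t := u) (by omega) B.2⟩
      left_inv := fun A => Subtype.ext (image_rotate_image_rotate htu A.2.1)
      right_inv := fun B => Subtype.ext (image_rotate_image_rotate (by omega) B.2.1) }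

end Rotation

theorem isStable_insert_iff {n s : ℕ} {T : Finset ℕ} (hT : ∀ a ∈ T, a < n) :
    IsStable n s (insert n T) ↔ T ⊆ Icc s (n - s) ∧ Separated s T := by
  constructor
  · intro h
    refine ⟨fun a ha => ?_, fun a ha b hb hab => ?_⟩
    · have := hT a ha
      have := h a (mem_insert_of_mem ha) n (mem_insert_self _ _) this
      exact mem_Icc.mpr (by omega)
    · have := h a (mem_insert_of_mem ha) b (mem_insert_of_mem hb) hab
      omega
  · rintro ⟨hsub, hsep⟩ a ha b hb hab
    rcases mem_insert.mp ha with ha | ha <;> rcases mem_insert.mp hb with hb | hb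
    · omega
    · have := hT b hb; omega
    · have := mem_Icc.mp (hsub ha); omega
    · have := mem_Icc.mp (hsub ha)
      have := mem_Icc.mp (hsub hb)
      have := hsep a ha b hb hab
      omega

def stableContainingTopEquiv {n k s : ℕ} (hn : 0 < n) (hk : 0 < k) (hs : 0 < s) :
    {A : Finset ℕ // A ⊆ Icc 1 n ∧ A.card = k ∧ IsStable n s A ∧ n ∈ A} ≃
      {T : Finset ℕ // T ⊆ Icc s (n - s) ∧ T.card = k - 1 ∧ Separated s T} where
  toFun A :=
    have hlt : ∀ a ∈ A.1.erase n, a < n := fun a ha =>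
      lt_of_le_of_ne (mem_Icc.mp (A.2.1 (mem_of_mem_erase ha))).2 (ne_of_mem_erase ha)
    have hst := (isStable_insert_iff hlt).mp (by rw [insert_erase A.2.2.2.2]; exact A.2.2.2.1)
    ⟨A.1.erase n, hst.1, by rw [card_erase_of_mem A.2.2.2.2, A.2.2.1], hst.2⟩
  invFun T :=
    have hlt : ∀ a ∈ T.1, a < n := fun a ha => by have := mem_Icc.mp (T.2.1 ha); omega
    ⟨insert n T.1, insert_subset (mem_Icc.mpr ⟨hn, le_rfl⟩) fun a ha => by
        have := mem_Icc.mp (T.2.1 ha); exact mem_Icc.mpr (by omega),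
      by rw [card_insert_of_notMem fun h => (hlt n h).false, T.2.2.1]; omega,
      (isStable_insert_iff hlt).mpr ⟨T.2.1, T.2.2.2⟩, mem_insert_self _ _⟩
  left_inv A := Subtype.ext (insert_erase A.2.2.2.2)
  right_inv T := Subtype.ext (erase_insert fun h => by have := mem_Icc.mp (T.2.1 h); omega)

theorem natCard_separated_subset_Icc (s a b j : ℕ) :
    Nat.card {T : Finset ℕ // T ⊆ Icc a b ∧ T.card = j ∧ Separated s T} =
      #(separatedSubsets s a (b + 1 - a) j) := by
  rw [← Nat.card_eq_finsetCard]
  refine Nat.card_congr (Equiv.subtypeEquivRight fun T => ?_)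
  rw [mem_separatedSubsets, show Ico a (a + (b + 1 - a)) = Icc a b by ext; simp; omega]

theorem count_stable_subsets_containing_general (n k s : ℕ) (hn : 0 < n) (hk : 0 < k)
    (hs : 0 < s) (i : ℕ) (hi : i ∈ Finset.Icc 1 n) :
    Nat.card {A : Finset ℕ //
        A ⊆ Finset.Icc 1 n ∧ A.card = k ∧ IsStable n s A ∧ i ∈ A} =
      (n - k * (s - 1) - 1).choose (k - 1) := by
  have hi' := mem_Icc.mp hi
  have hrot : rotate n (n - i) i = n := by unfold rotate; split_ifs <;> omega
  rw [card_stable_containing_rotate (t := n - i) (u := i) (by omega) hi, hrot,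
    Nat.card_congr (stableContainingTopEquiv hn hk hs), natCard_separated_subset_Icc,
    card_separatedSubsets hs]
  obtain _ | _ | k := k
  · omega
  · simp
  · have : (k + 1 + 1) * (s - 1) = k * (s - 1) + 2 * (s - 1) := by ring
    rw [show k + 1 + 1 - 1 - 1 = k by omega]
    congr 1
    omega

theorem count_stable_subsets_containing (n k s : ℕ) (hn : 0 < n) (hk : 0 < k)
    (hs : 0 < s) (hnk : s * k ≤ n) (i : ℕ) (hi : i ∈ Finset.Icc 1 n) :
    Nat.card {A : Finset ℕ //
        A ⊆ Finset.Icc 1 n ∧ A.card = k ∧ IsStable n s A ∧ i ∈ A} =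
      (n - k * (s - 1) - 1).choose (k - 1) :=
  count_stable_subsets_containing_general n k s hn hk hs i hi
end

section
/- Let n, k be positive integers and s a positive integer with n ≥ sk. The number of s-stable k-subsets of [n] equals (n/k)·C(n - k(s-1) - 1, k-1). -/
/-!
An `s`-stable `k`-set `A ⊆ [n]` is determined by its least element `a` and its cyclic gap
sequence `h` (the differences of consecutive elements, the last one wrapping around from
`max A` to `a + n`). The gap sequences are exactly the compositions of `n` into `k` parts
`≥ s`, and `a` ranges over `1, …, h (k - 1)`. So the count is `∑ₕ h (k - 1)`, which by the
symmetry of the parts is `n / k` times the number of compositions, and by stars and bars there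
are `C(n - s k + k - 1, k - 1)` of these.
-/

open Finset

namespace Fin

variable {M : Type*} {n : ℕ}

theorem partialSum_last [AddCommMonoid M] (f : Fin n → M) :
    partialSum f (last n) = ∑ i, f i := by
  rw [partialSum, List.take_of_length_le (by simp), List.sum_ofFn]

theorem partialSum_injective [AddLeftCancelMonoid M] :
    Function.Injective (partialSum : (Fin n → M) → Fin (n + 1) → M) := by
  intro f g hfg
  funext i
  have h := congrFun hfg i.succ
  rwa [partialSum_succ, partialSum_succ, congrFun hfg i.castSucc, add_left_cancel_iff] at h

theorem monotone_partialSum [AddCommMonoid M] [PartialOrder M] [CanonicallyOrderedAdd M]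
    (f : Fin n → M) : Monotone (partialSum f) :=
  monotone_iff_le_succ.2 fun i => by simp [partialSum_succ]

theorem strictMono_partialSum [AddCommMonoid M] [PartialOrder M] [CanonicallyOrderedAdd M]
    [IsLeftCancelAdd M] {f : Fin n → M} (hf : ∀ i, 0 < f i) : StrictMono (partialSum f) :=
  strictMono_iff_lt_succ.2 fun i => by
    rw [partialSum_succ]; exact lt_add_of_pos_right _ (hf i)

theorem add_partialSum_sub {E : Fin (n + 1) → ℕ} (hE : Monotone E) (j : Fin (n + 1)) :
    E 0 + partialSum (fun i => E i.succ - E i.castSucc) j = E j := by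
  induction j using Fin.induction with
  | zero => simp
  | succ i ih =>
    rw [partialSum_succ, ← add_assoc, ih, Nat.add_sub_cancel' (hE (castSucc_le_succ i))]

end Fin

theorem Finset.Nat.card_antidiagonalTuple_succ (m r : ℕ) :
    #(Nat.antidiagonalTuple (m + 1) r) = (r + m).choose m := by
  rw [← Fintype.card_coe, Fintype.card_congr ((Equiv.subtypeEquivRight fun _ =>
      Nat.mem_antidiagonalTuple).trans (Sym.equivNatSumOfFintype (Fin (m + 1)) r).symm),
    Sym.card_sym_eq_choose, Fintype.card_fin, add_right_comm, Nat.add_sub_cancel,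
    add_comm r, Nat.choose_symm_add]

def compositions (n k s : ℕ) : Finset (Fin k → ℕ) :=
  (Nat.antidiagonalTuple k n).filter fun h => ∀ i, s ≤ h i

variable {n k s : ℕ}

theorem mem_compositions {h : Fin k → ℕ} :
    h ∈ compositions n k s ↔ ∑ i, h i = n ∧ ∀ i, s ≤ h i := by
  rw [compositions, mem_filter, Nat.mem_antidiagonalTuple]

theorem card_compositions (hsk : s * k ≤ n) :
    #(compositions n k s) = #(Nat.antidiagonalTuple k (n - s * k)) := by
  have sum_add_const (h : Fin k → ℕ) : ∑ i, (h i + s) = ∑ i, h i + s * k := by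
    simp [sum_add_distrib, mul_comm]
  refine card_nbij' (fun h i => h i - s) (fun h i => h i + s) (fun h hh => ?_) (fun h hh => ?_)
    (fun h hh => ?_) (fun h _ => by simp)
  · obtain ⟨hsum, hge⟩ := mem_compositions.1 hh
    have := sum_add_const fun i => h i - s
    simp only [Nat.sub_add_cancel (hge _), hsum] at this
    rw [mem_coe, Nat.mem_antidiagonalTuple]
    dsimp only
    omega
  · rw [mem_coe, Nat.mem_antidiagonalTuple] at hh
    rw [mem_coe, mem_compositions, sum_add_const, hh, Nat.sub_add_cancel hsk]
    exact ⟨rfl, fun i => Nat.le_add_left s (h i)⟩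
  · funext i
    exact Nat.sub_add_cancel ((mem_compositions.1 hh).2 i)

theorem sum_apply_compositions_eq (j j' : Fin k) :
    ∑ h ∈ compositions n k s, h j = ∑ h ∈ compositions n k s, h j' := by
  have hswap : ∀ h ∈ compositions n k s, h ∘ Equiv.swap j j' ∈ compositions n k s := by
    intro h hh
    rw [mem_compositions] at hh ⊢
    exact ⟨by simpa [Equiv.sum_comp] using hh.1, fun i => hh.2 _⟩
  refine sum_nbij' (· ∘ Equiv.swap j j') (· ∘ Equiv.swap j j') hswap hswap ?_ ?_ ?_ <;>
    simp [Function.comp_def]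

theorem mul_sum_apply_compositions (j : Fin k) :
    k * ∑ h ∈ compositions n k s, h j = n * #(compositions n k s) := by
  calc k * ∑ h ∈ compositions n k s, h j
      = ∑ j' : Fin k, ∑ h ∈ compositions n k s, h j' := by
        simp [sum_apply_compositions_eq _ j]
    _ = ∑ h ∈ compositions n k s, ∑ j' : Fin k, h j' := sum_comm
    _ = n * #(compositions n k s) := by
        rw [sum_congr rfl fun h hh => (mem_compositions.1 hh).1, sum_const, smul_eq_mul, mul_comm]

theorem pos_of_mem_compositions {h : Fin k → ℕ} (hs : 0 < s) (hh : h ∈ compositions n k s)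
    (i : Fin k) : 0 < h i :=
  hs.trans_le ((mem_compositions.1 hh).2 i)

instance (n s : ℕ) : DecidablePred (IsStable n s) := fun _ => by
  unfold IsStable; infer_instance

def stableSets (n s k : ℕ) : Finset (Finset ℕ) :=
  ((Icc 1 n).powersetCard k).filter (IsStable n s)

theorem mem_stableSets {A : Finset ℕ} :
    A ∈ stableSets n s k ↔ A ⊆ Icc 1 n ∧ #A = k ∧ IsStable n s A := by
  rw [stableSets, mem_filter, mem_powersetCard, and_assoc]

section OfGaps

open Fin

variable {m : ℕ} {h h' : Fin (m + 1) → ℕ} {a a' : ℕ}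

-- `a` is the least element and `h (last m)` the gap from the largest one round to `a + n`.
def ofGaps (h : Fin (m + 1) → ℕ) (a : ℕ) : Finset ℕ :=
  univ.image fun i : Fin (m + 1) => a + partialSum h i.castSucc

theorem strictMono_add_partialSum_castSucc (hh : ∀ i, 0 < h i) (a : ℕ) :
    StrictMono fun i : Fin (m + 1) => a + partialSum h i.castSucc :=
  ((strictMono_partialSum hh).comp strictMono_castSucc).const_add a

theorem partialSum_castSucc_last_add (hh : h ∈ compositions n (m + 1) s) :
    partialSum h (last m).castSucc + h (last m) = n := by
  rw [← partialSum_succ, succ_last, partialSum_last, (mem_compositions.1 hh).1]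

theorem ofGaps_mem_stableSets (hs : 0 < s) (hh : h ∈ compositions n (m + 1) s)
    (ha : a ∈ Icc 1 (h (last m))) : ofGaps h a ∈ stableSets n s (m + 1) := by
  have hmono := strictMono_add_partialSum_castSucc (pos_of_mem_compositions hs hh) a
  have htotal := partialSum_castSucc_last_add hh
  have hge := (mem_compositions.1 hh).2
  have hle_last (i : Fin (m + 1)) : partialSum h i.castSucc ≤ partialSum h (last m).castSucc :=
    monotone_partialSum h (castSucc_le_castSucc_iff.2 (le_last i))
  rw [mem_Icc] at ha
  refine mem_stableSets.2 ⟨fun x hx => ?_, ?_, ?_⟩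
  · obtain ⟨i, -, rfl⟩ := mem_image.1 hx
    have := hle_last i
    rw [mem_Icc]
    omega
  · rw [ofGaps, card_image_of_injective _ hmono.injective, card_univ, Fintype.card_fin]
  · intro x hx y hy hxy
    obtain ⟨i, -, rfl⟩ := mem_image.1 hx
    obtain ⟨j, -, rfl⟩ := mem_image.1 hy
    have hij : i < j := hmono.lt_iff_lt.1 hxy
    have hgap : partialSum h i.castSucc + h i ≤ partialSum h j.castSucc := by
      rw [← partialSum_succ]; exact monotone_partialSum h (succ_le_castSucc_iff.2 hij)
    have := hle_last j
    have := hge i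
    have := hge (last m)
    omega

theorem eq_of_ofGaps_eq (hs : 0 < s) (hh : h ∈ compositions n (m + 1) s)
    (hh' : h' ∈ compositions n (m + 1) s) (heq : ofGaps h a = ofGaps h' a') :
    h = h' ∧ a = a' := by
  rw [ofGaps, ofGaps] at heq
  have hfun : (fun i : Fin (m + 1) => a + partialSum h i.castSucc) =
      fun i => a' + partialSum h' i.castSucc := by
    rw [← (strictMono_add_partialSum_castSucc (pos_of_mem_compositions hs hh) a).range_inj
      (strictMono_add_partialSum_castSucc (pos_of_mem_compositions hs hh') a'),
      ← Set.image_univ, ← Set.image_univ, ← coe_univ, ← coe_image, ← coe_image]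
    exact congrArg _ heq
  have ha : a = a' := by simpa using congrFun hfun 0
  subst ha
  refine ⟨partialSum_injective (funext fun j => ?_), rfl⟩
  induction j using lastCases with
  | last => rw [partialSum_last, partialSum_last, (mem_compositions.1 hh).1,
      (mem_compositions.1 hh').1]
  | cast i => simpa using congrFun hfun i

theorem exists_ofGaps_eq (hsn : s ≤ n) {A : Finset ℕ} (hA : A ∈ stableSets n s (m + 1)) :
    ∃ h ∈ compositions n (m + 1) s, ∃ a ∈ Icc 1 (h (last m)), ofGaps h a = A := by
  obtain ⟨hsub, hcard, hst⟩ := mem_stableSets.1 hA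
  set e := A.orderEmbOfFin hcard
  have he (i : Fin (m + 1)) : 1 ≤ e i ∧ e i ≤ n :=
    mem_Icc.1 (hsub (A.orderEmbOfFin_mem hcard i))
  have hgap {i j : Fin (m + 1)} (hij : i < j) : s ≤ e j - e i ∧ e j - e i ≤ n - s :=
    hst _ (A.orderEmbOfFin_mem hcard i) _ (A.orderEmbOfFin_mem hcard j) (e.strictMono hij)
  have hdiam : e (last m) - e 0 ≤ n - s := by
    rcases (zero_le (last m)).lt_or_eq with h0 | h0
    · exact (hgap h0).2
    · rw [h0, Nat.sub_self]; exact Nat.zero_le _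
  -- one period of the elements of `A` repeated with period `n`; its differences are the gaps
  set E : Fin (m + 2) → ℕ := snoc (fun i => e i) (e 0 + n)
  have hE_castSucc (i : Fin (m + 1)) : E i.castSucc = e i := snoc_castSucc ..
  have hE_last : E (last (m + 1)) = e 0 + n := snoc_last ..
  have hE : Monotone E := monotone_iff_le_succ.2 fun i => by
    induction i using lastCases with
    | last => rw [succ_last, hE_last, hE_castSucc]; have := he (last m); omega
    | cast i => rw [succ_castSucc, hE_castSucc, hE_castSucc]; exact e.monotone (castSucc_le_succ i)
  set h : Fin (m + 1) → ℕ := fun i => E i.succ - E i.castSucc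
  have hps (j : Fin (m + 2)) : e 0 + partialSum h j = E j := by
    rw [← add_partialSum_sub hE j, ← hE_castSucc 0]; rfl
  have h_last : h (last m) = e 0 + n - e (last m) := by
    simp only [h, succ_last, hE_last, hE_castSucc]
  refine ⟨h, mem_compositions.2 ⟨?_, fun i => ?_⟩, e 0, ?_, ?_⟩
  · have := hps (last (m + 1))
    rw [hE_last, partialSum_last] at this
    omega
  · induction i using lastCases with
    | last => rw [h_last]; omega
    | cast i =>
      simp only [h, succ_castSucc, hE_castSucc]
      exact (hgap castSucc_lt_succ).1
  · rw [mem_Icc, h_last]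
    have := he 0
    have := he (last m)
    omega
  · rw [ofGaps, ← A.image_orderEmbOfFin_univ hcard]
    exact image_congr fun i _ => by rw [hps, hE_castSucc]

theorem card_stableSets (hs : 0 < s) (hsn : s ≤ n) :
    #(stableSets n s (m + 1)) = ∑ h ∈ compositions n (m + 1) s, h (last m) := by
  calc #(stableSets n s (m + 1))
      = #((compositions n (m + 1) s).sigma fun h => Icc 1 (h (last m))) := by
        refine (card_bij (fun p _ => ofGaps p.1 p.2) (fun p hp => ?_) (fun p hp q hq hpq => ?_)
          fun A hA => ?_).symm
        · rw [mem_sigma] at hp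
          exact ofGaps_mem_stableSets hs hp.1 hp.2
        · obtain ⟨h₁, h₂⟩ := eq_of_ofGaps_eq hs (mem_sigma.1 hp).1 (mem_sigma.1 hq).1 hpq
          exact Sigma.ext h₁ (heq_of_eq h₂)
        · obtain ⟨h, hh, a, ha, rfl⟩ := exists_ofGaps_eq hsn hA
          exact ⟨⟨h, a⟩, mem_sigma.2 ⟨hh, ha⟩, rfl⟩
    _ = ∑ h ∈ compositions n (m + 1) s, h (last m) := by simp [card_sigma]

end OfGaps

theorem count_stable_subsets_general (n k s : ℕ) (hk : 0 < k)
    (hs : 0 < s) (hnk : s * k ≤ n) :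
    (Nat.card {A : Finset ℕ //
        A ⊆ Finset.Icc 1 n ∧ A.card = k ∧ IsStable n s A} : ℚ) =
      (n : ℚ) / (k : ℚ) * ((n - k * (s - 1) - 1).choose (k - 1) : ℚ) := by
  obtain ⟨m, rfl⟩ := Nat.exists_eq_add_one_of_ne_zero hk.ne'
  have hsn : s ≤ n := le_of_mul_le_of_one_le_left hnk (Nat.le_add_left 1 m)
  have hcard : Nat.card {A : Finset ℕ // A ⊆ Icc 1 n ∧ #A = m + 1 ∧ IsStable n s A} =
      #(stableSets n s (m + 1)) := by
    rw [← Nat.card_eq_finsetCard]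
    exact Nat.card_congr (Equiv.subtypeEquivRight fun _ => mem_stableSets.symm)
  have hchoose : n - s * (m + 1) + m = n - (m + 1) * (s - 1) - 1 := by
    have := Nat.le_mul_of_pos_left (m + 1) hs
    rw [mul_comm (m + 1), Nat.sub_one_mul]
    omega
  have key : (m + 1) * #(stableSets n s (m + 1)) = n * (n - (m + 1) * (s - 1) - 1).choose m := by
    rw [card_stableSets hs hsn, mul_sum_apply_compositions, card_compositions hnk,
      Nat.card_antidiagonalTuple_succ, hchoose]
  rw [hcard, Nat.add_sub_cancel]
  field_simp
  exact_mod_cast (mul_comm _ _).trans key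

theorem count_stable_subsets (n k s : ℕ) (hn : 0 < n) (hk : 0 < k)
    (hs : 0 < s) (hnk : s * k ≤ n) :
    (Nat.card {A : Finset ℕ //
        A ⊆ Finset.Icc 1 n ∧ A.card = k ∧ IsStable n s A} : ℚ) =
      (n : ℚ) / (k : ℚ) * ((n - k * (s - 1) - 1).choose (k - 1) : ℚ) :=
  count_stable_subsets_general n k s hk hs hnk
end

section
/- An independent set F in a graph G is a free independent set (i.e., extends to at least two distinct maximal independent sets) if and only if there exists an edge uv of G such that (N(u) ∪ N(v)) ∩ F = ∅. -/
/-- `S` is an independent set of `G`. -/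
def IsIndep {V : Type*} (G : SimpleGraph V) (S : Set V) : Prop :=
  ∀ ⦃u⦄, u ∈ S → ∀ ⦃v⦄, v ∈ S → ¬ G.Adj u v

/-!
If `F` lies in two distinct maximal independent sets `M₁, M₂`, pick `x ∈ M₁ \ M₂`; by maximality
of `M₂`, `x` has a neighbour `y ∈ M₂`, and `xy` is an edge with no neighbours in `F ⊆ M₁ ∩ M₂`.
Conversely, if no vertex of `F` is adjacent to `u` or `v` for an edge `uv`, then `F ∪ {u}` and
`F ∪ {v}` are independent, and maximal independent sets containing them (Zorn) are distinct since
no independent set contains both `u` and `v`.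
-/

namespace IsIndep

variable {V : Type*} {G : SimpleGraph V} {S M : Set V} {x : V}

theorem iff_pairwise : IsIndep G S ↔ S.Pairwise fun u v ↦ ¬ G.Adj u v :=
  ⟨fun h _ hu _ hv _ ↦ h hu hv, fun h _ hu _ hv huv ↦ h hu hv huv.ne huv⟩

theorem mono {T : Set V} (hT : IsIndep G T) (hST : S ⊆ T) : IsIndep G S :=
  fun _ hu _ hv ↦ hT (hST hu) (hST hv)

theorem disjoint_neighborSet (hS : IsIndep G S) (hx : x ∈ S) : Disjoint (G.neighborSet x) S :=
  Set.disjoint_left.2 fun _ hxy hy ↦ hS hx hy hxy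

theorem insert_iff : IsIndep G (insert x S) ↔ IsIndep G S ∧ Disjoint (G.neighborSet x) S := by
  refine ⟨fun h ↦ ⟨h.mono (Set.subset_insert x S),
    (h.disjoint_neighborSet (Set.mem_insert x S)).mono_right (Set.subset_insert x S)⟩, ?_⟩
  rintro ⟨hS, hx⟩ u (rfl | hu) v (rfl | hv) huv
  · exact huv.ne rfl
  · exact Set.disjoint_left.1 hx huv hv
  · exact Set.disjoint_left.1 hx huv.symm hu
  · exact hS hu hv huv

theorem sUnion_of_isChain {c : Set (Set V)} (hc : IsChain (· ⊆ ·) c)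
    (hind : ∀ s ∈ c, IsIndep G s) : IsIndep G (⋃₀ c) :=
  iff_pairwise.2 <| hc.pairwise_sUnion.2 fun s hs ↦ iff_pairwise.1 (hind s hs)

theorem exists_subset_maximal (hS : IsIndep G S) : ∃ M, S ⊆ M ∧ Maximal (IsIndep G) M :=
  zorn_subset_nonempty {T | IsIndep G T}
    (fun c hc hchain _ ↦ ⟨⋃₀ c, sUnion_of_isChain hchain hc, fun _ ↦ Set.subset_sUnion_of_mem⟩)
    S hS

theorem exists_adj_of_maximal_of_notMem (hM : Maximal (IsIndep G) M) (hx : x ∉ M) :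
    ∃ y ∈ M, G.Adj x y := by
  by_contra! h
  exact hx (hM.mem_of_prop_insert (insert_iff.2 ⟨hM.1, Set.disjoint_left.2 fun y hxy hy ↦
    h y hy hxy⟩))

end IsIndep

theorem freeIndep_iff_edge_general {V : Type*} (G : SimpleGraph V)
    (F : Set V) (hF : IsIndep G F) :
    (∃ M₁ M₂ : Set V, M₁ ≠ M₂ ∧ F ⊆ M₁ ∧ F ⊆ M₂ ∧
        Maximal (IsIndep G) M₁ ∧ Maximal (IsIndep G) M₂) ↔
      ∃ u v : V, G.Adj u v ∧ (G.neighborSet u ∪ G.neighborSet v) ∩ F = ∅ := by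
  simp only [← Set.disjoint_iff_inter_eq_empty, Set.disjoint_union_left]
  constructor
  · rintro ⟨M₁, M₂, hne, hF₁, hF₂, hM₁, hM₂⟩
    obtain ⟨x, hx₁, hx₂⟩ : ∃ x ∈ M₁, x ∉ M₂ :=
      Set.not_subset.1 fun h ↦ hne (hM₁.eq_of_subset hM₂.1 h)
    obtain ⟨y, hy₂, hxy⟩ := IsIndep.exists_adj_of_maximal_of_notMem hM₂ hx₂
    exact ⟨x, y, hxy, (hM₁.1.disjoint_neighborSet hx₁).mono_right hF₁,
      (hM₂.1.disjoint_neighborSet hy₂).mono_right hF₂⟩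
  · rintro ⟨u, v, huv, hu, hv⟩
    obtain ⟨M₁, huM₁, hM₁⟩ := (IsIndep.insert_iff.2 ⟨hF, hu⟩).exists_subset_maximal
    obtain ⟨M₂, hvM₂, hM₂⟩ := (IsIndep.insert_iff.2 ⟨hF, hv⟩).exists_subset_maximal
    refine ⟨M₁, M₂, ?_, (Set.subset_insert u F).trans huM₁, (Set.subset_insert v F).trans hvM₂,
      hM₁, hM₂⟩
    rintro rfl
    exact hM₁.1 (huM₁ (Set.mem_insert u F)) (hvM₂ (Set.mem_insert v F)) huv

theorem freeIndep_iff_edge {V : Type*} [Fintype V] (G : SimpleGraph V)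
    (F : Set V) (hF : IsIndep G F) :
    (∃ M₁ M₂ : Set V, M₁ ≠ M₂ ∧ F ⊆ M₁ ∧ F ⊆ M₂ ∧
        Maximal (IsIndep G) M₁ ∧ Maximal (IsIndep G) M₂) ↔
      ∃ u v : V, G.Adj u v ∧ (G.neighborSet u ∪ G.neighborSet v) ∩ F = ∅ :=
  freeIndep_iff_edge_general G F hF
end

section
/- For n > 2k, every free independent set in the Kneser graph KG(n,k) has size at most C(n-1, k-1) - C(n-k-1, k-1). -/
/-- The Kneser graph `KG(n,k)`: vertices are the `k`-subsets of an `n`-set,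
two of them being adjacent iff they are disjoint. -/
def kneser (n k : ℕ) : SimpleGraph {A : Finset (Fin n) // A.card = k} where
  Adj A B := Disjoint A.1 B.1 ∧ A ≠ B
  symm := ⟨by rintro A B ⟨h, hne⟩; exact ⟨h.symm, hne.symm⟩⟩
  loopless := ⟨by rintro A ⟨-, hne⟩; exact hne rfl⟩

/-- A free independent set: an independent set contained in at least two
distinct maximal independent sets. -/
def FreeIndep {V : Type*} (G : SimpleGraph V) (F : Set V) : Prop :=
  IsIndep G F ∧ ∃ M₁ M₂ : Set V, M₁ ≠ M₂ ∧ F ⊆ M₁ ∧ F ⊆ M₂ ∧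
    Maximal (IsIndep G) M₁ ∧ Maximal (IsIndep G) M₂

/-!
Let `M₁ ≠ M₂` be maximal independent sets containing `F`. A vertex `B ∈ M₁ \ M₂` is adjacent
to some `C ∈ M₂` by maximality of `M₂`, so `F ∪ {B}` is an intersecting family all of whose
members except `B` meet the set `C`, which is disjoint from `B`. If `F ∪ {B}` has a common
element `y`, then `y ∈ B` lies outside `C`, and `F` is contained in the family of `k`-sets
through `y` meeting `C`, which has exactly `C(n-1,k-1) - C(n-k-1,k-1)` members. Otherwise the
Hilton–Milner theorem bounds `|F| + 1` by `C(n-1,k-1) - C(n-k-1,k-1) + 1`.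

Hilton–Milner is proved by shifting. A shift `j ↦ i` keeps a family intersecting; if it creates
a common element, every member met `{i, j}`, and the members containing exactly one of `i, j`
then give two cross-intersecting `(k-1)`-uniform families on `n - 2` points, which the
Frankl–Tokushige inequality `|𝒜| + |ℬ| ≤ C(m,a) - C(m-a,a) + 1` controls. Shifted families
are handled by induction on `n`, splitting off the largest point; the same induction proves
the Frankl–Tokushige inequality for shifted pairs, and shifting reduces the general case to it.
-/

open Finset
open scoped FinsetFamily

variable {α β : Type*}

theorem Nat.choose_lt_choose_succ_left {n k : ℕ} (hk : 0 < k) (hkn : k ≤ n + 1) :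
    n.choose k < (n + 1).choose k := by
  rw [Nat.choose_succ_left n k hk]
  have := Nat.choose_pos (by omega : k - 1 ≤ n)
  omega

theorem Nat.choose_two_mul {k : ℕ} (hk : 0 < k) :
    (2 * k).choose k = 2 * (2 * k - 1).choose (k - 1) := by
  obtain ⟨k, rfl⟩ := Nat.exists_eq_add_of_le' hk
  rw [show 2 * (k + 1) = 2 * k + 1 + 1 by ring, Nat.choose_succ_succ', Nat.choose_symm_half,
    Nat.add_sub_cancel, Nat.add_sub_cancel, ← two_mul]

theorem Finset.range_add_one_erase (m : ℕ) : (range (m + 1)).erase m = range m := by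
  rw [range_add_one, erase_insert notMem_range_self]

def CrossIntersecting (𝒜 ℬ : Finset (Finset α)) : Prop :=
  ∀ A ∈ 𝒜, ∀ B ∈ ℬ, ¬Disjoint A B

namespace CrossIntersecting

variable {𝒜 ℬ : Finset (Finset α)} {S : Finset α} {k : ℕ}

theorem symm (h : CrossIntersecting 𝒜 ℬ) : CrossIntersecting ℬ 𝒜 :=
  fun B hB A hA hd => h A hA B hB hd.symm

theorem mono {𝒜' ℬ' : Finset (Finset α)} (h : CrossIntersecting 𝒜 ℬ) (h𝒜 : 𝒜' ⊆ 𝒜)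
    (hℬ : ℬ' ⊆ ℬ) : CrossIntersecting 𝒜' ℬ' :=
  fun A hA B hB => h A (h𝒜 hA) B (hℬ hB)

theorem pos (h : CrossIntersecting 𝒜 ℬ) (h𝒜 : 𝒜 ⊆ powersetCard k S) (h𝒜ne : 𝒜.Nonempty)
    (hℬne : ℬ.Nonempty) : 0 < k := by
  obtain ⟨A, hA⟩ := h𝒜ne
  obtain ⟨B, hB⟩ := hℬne
  refine Nat.pos_of_ne_zero fun hk => h A hA B hB ?_
  rw [card_eq_zero.1 ((mem_powersetCard.1 (h𝒜 hA)).2.trans hk)]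
  exact disjoint_empty_left B

theorem two_le [Nonempty α] (h : CrossIntersecting 𝒜 𝒜) (h𝒜 : 𝒜 ⊆ powersetCard k S)
    (hnt : ∀ x, ∃ A ∈ 𝒜, x ∉ A) : 2 ≤ k := by
  obtain ⟨A, hA, -⟩ := hnt (Classical.arbitrary α)
  have hk := h.pos h𝒜 ⟨A, hA⟩ ⟨A, hA⟩
  by_contra! hk2
  obtain ⟨a, rfl⟩ := card_eq_one.1 ((mem_powersetCard.1 (h𝒜 hA)).2.trans (by omega))
  obtain ⟨B, hB, haB⟩ := hnt a
  exact h _ hA B hB (disjoint_singleton_left.2 haB)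

theorem image_image [DecidableEq β] (h : CrossIntersecting 𝒜 ℬ) (g : α → β) :
    CrossIntersecting (𝒜.image (image g)) (ℬ.image (image g)) := by
  simp only [CrossIntersecting, mem_image, forall_exists_index, and_imp,
    forall_apply_eq_imp_iff₂]
  intro A hA B hB hd
  obtain ⟨x, hxA, hxB⟩ := not_disjoint_iff.1 (h A hA B hB)
  exact disjoint_left.1 hd (mem_image_of_mem g hxA) (mem_image_of_mem g hxB)

variable [DecidableEq α]

/-- Complementation in `S` maps `ℬ` into the `k`-subsets of `S` that miss `𝒜`. -/
theorem card_add_card_le_of_card_eq_two_mul (h : CrossIntersecting 𝒜 ℬ)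
    (h𝒜 : 𝒜 ⊆ powersetCard k S) (hℬ : ℬ ⊆ powersetCard k S) (hS : #S = 2 * k) :
    #𝒜 + #ℬ ≤ (2 * k).choose k := by
  have hinj : Set.InjOn (S \ ·) ℬ := fun B hB B' hB' hBB' => by
    rw [← Finset.sdiff_sdiff_eq_self (mem_powersetCard.1 (hℬ hB)).1,
      ← Finset.sdiff_sdiff_eq_self (mem_powersetCard.1 (hℬ hB')).1]
    exact congrArg (S \ ·) hBB'
  have hcompl : ℬ.image (S \ ·) ⊆ powersetCard k S := by
    intro X hX
    obtain ⟨B, hB, rfl⟩ := mem_image.1 hX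
    obtain ⟨hBS, hBk⟩ := mem_powersetCard.1 (hℬ hB)
    exact mem_powersetCard.2 ⟨sdiff_subset, by rw [card_sdiff_of_subset hBS, hS, hBk]; omega⟩
  have hdisj : Disjoint 𝒜 (ℬ.image (S \ ·)) := by
    refine disjoint_left.2 fun A hA hA' => ?_
    obtain ⟨B, hB, rfl⟩ := mem_image.1 hA'
    exact h _ hA B hB disjoint_sdiff_self_left
  calc #𝒜 + #ℬ = #(𝒜 ∪ ℬ.image (S \ ·)) := by
        rw [card_union_of_disjoint hdisj, card_image_of_injOn hinj]
    _ ≤ #(powersetCard k S) := card_le_card (union_subset h𝒜 hcompl)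
    _ = (2 * k).choose k := by rw [card_powersetCard, hS]

theorem card_le_of_card_eq_two_mul (h : CrossIntersecting 𝒜 𝒜) (h𝒜 : 𝒜 ⊆ powersetCard k S)
    (hS : #S = 2 * k) (hk : 0 < k) : #𝒜 ≤ (2 * k - 1).choose (k - 1) := by
  have := h.card_add_card_le_of_card_eq_two_mul h𝒜 h𝒜 hS
  rw [Nat.choose_two_mul hk] at this
  omega

theorem not_disjoint_of_mem_memberSubfamily {C X : Finset α} {a : α}
    (h : CrossIntersecting 𝒜 ℬ) (hC : C ∈ ℬ) (haC : a ∉ C) (hX : X ∈ 𝒜.memberSubfamily a) :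
    ¬Disjoint X C := fun hXC =>
  h _ (mem_memberSubfamily.1 hX).1 C hC (disjoint_insert_left.2 ⟨haC, hXC⟩)

theorem memberSubfamily_nonMemberSubfamily {i j : α} (h : CrossIntersecting 𝒜 ℬ) :
    CrossIntersecting ((𝒜.memberSubfamily i).nonMemberSubfamily j)
      ((ℬ.nonMemberSubfamily i).memberSubfamily j) := by
  intro X hX Y hY hXY
  simp only [mem_memberSubfamily, mem_nonMemberSubfamily] at hX hY
  exact h _ hX.1.1 _ hY.1.1
    (disjoint_insert_left.2 ⟨hY.1.2, disjoint_insert_right.2 ⟨hX.2, hXY⟩⟩)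

end CrossIntersecting

section Subfamilies

variable [DecidableEq α] {𝒜 : Finset (Finset α)} {S C : Finset α} {r : ℕ}

theorem Finset.memberSubfamily_subset_powersetCard {a : α} (h𝒜 : 𝒜 ⊆ powersetCard r S) :
    𝒜.memberSubfamily a ⊆ powersetCard (r - 1) (S.erase a) := by
  intro X hX
  obtain ⟨hXa, haX⟩ := mem_memberSubfamily.1 hX
  obtain ⟨hS, hr⟩ := mem_powersetCard.1 (h𝒜 hXa)
  rw [card_insert_of_notMem haX] at hr
  exact mem_powersetCard.2 ⟨fun x hx => mem_erase.2 ⟨by rintro rfl; exact haX hx,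
    hS (mem_insert_of_mem hx)⟩, by omega⟩

theorem Finset.nonMemberSubfamily_subset_powersetCard {a : α} (h𝒜 : 𝒜 ⊆ powersetCard r S) :
    𝒜.nonMemberSubfamily a ⊆ powersetCard r (S.erase a) := by
  intro X hX
  obtain ⟨hX𝒜, haX⟩ := mem_nonMemberSubfamily.1 hX
  obtain ⟨hS, hr⟩ := mem_powersetCard.1 (h𝒜 hX𝒜)
  exact mem_powersetCard.2 ⟨fun x hx => mem_erase.2 ⟨by rintro rfl; exact haX hx, hS hx⟩, hr⟩

theorem Finset.card_eq_of_forall_mem_or_mem {i j : α} (hcover : ∀ A ∈ 𝒜, i ∈ A ∨ j ∈ A) :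
    #𝒜 = #((𝒜.memberSubfamily i).memberSubfamily j) +
      #((𝒜.memberSubfamily i).nonMemberSubfamily j) +
      #((𝒜.nonMemberSubfamily i).memberSubfamily j) := by
  have hnone : (𝒜.nonMemberSubfamily i).nonMemberSubfamily j = ∅ :=
    eq_empty_of_forall_notMem fun A hA => by
      simp only [mem_nonMemberSubfamily] at hA
      exact (hcover A hA.1.1).elim hA.1.2 hA.2
  rw [← card_memberSubfamily_add_card_nonMemberSubfamily i 𝒜,
    ← card_memberSubfamily_add_card_nonMemberSubfamily j (𝒜.memberSubfamily i),
    ← card_memberSubfamily_add_card_nonMemberSubfamily j (𝒜.nonMemberSubfamily i), hnone,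
    card_empty, add_zero]

theorem card_add_choose_le_of_forall_not_disjoint (hC : C ⊆ S) (h𝒜 : 𝒜 ⊆ powersetCard r S)
    (hmeet : ∀ A ∈ 𝒜, ¬Disjoint A C) : #𝒜 + (#S - #C).choose r ≤ (#S).choose r := by
  have hdisj : Disjoint 𝒜 (powersetCard r (S \ C)) := disjoint_left.2 fun A hA hA' =>
    hmeet A hA (disjoint_left.2 fun _ hx => (mem_sdiff.1 ((mem_powersetCard.1 hA').1 hx)).2)
  calc #𝒜 + (#S - #C).choose r = #(𝒜 ∪ powersetCard r (S \ C)) := by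
        rw [card_union_of_disjoint hdisj, card_powersetCard, card_sdiff_of_subset hC]
    _ ≤ #(powersetCard r S) :=
        card_le_card (union_subset h𝒜 (powersetCard_mono sdiff_subset))
    _ = (#S).choose r := card_powersetCard r S

theorem card_add_choose_le_of_forall_mem_not_disjoint {y : α} (hC : C ⊆ S) (hy : y ∈ S)
    (hyC : y ∉ C) (h𝒜 : 𝒜 ⊆ powersetCard r S) (hy𝒜 : ∀ A ∈ 𝒜, y ∈ A)
    (hmeet : ∀ A ∈ 𝒜, ¬Disjoint A C) :
    #𝒜 + (#S - 1 - #C).choose (r - 1) ≤ (#S - 1).choose (r - 1) := by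
  have hnon : 𝒜.nonMemberSubfamily y = ∅ := eq_empty_of_forall_notMem fun A hA =>
    (mem_nonMemberSubfamily.1 hA).2 (hy𝒜 A (mem_nonMemberSubfamily.1 hA).1)
  have hcard := card_memberSubfamily_add_card_nonMemberSubfamily y 𝒜
  rw [hnon, card_empty, add_zero] at hcard
  rw [← hcard, ← card_erase_of_mem hy]
  refine card_add_choose_le_of_forall_not_disjoint (fun x hx => mem_erase.2 ⟨?_, hC hx⟩)
    (memberSubfamily_subset_powersetCard h𝒜) fun X hX hXC => ?_
  · rintro rfl; exact hyC hx
  · exact hmeet _ (mem_memberSubfamily.1 hX).1 (disjoint_insert_left.2 ⟨hyC, hXC⟩)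

end Subfamilies

section Relabel

variable [DecidableEq β] {𝒜 : Finset (Finset α)} {S : Finset α} {k : ℕ} {g : α → β}

theorem exists_injOn_image_eq_range (S : Finset α) :
    ∃ g : α → ℕ, Set.InjOn g S ∧ S.image g = range #S := by
  classical
  let g : α → ℕ := fun x => if hx : x ∈ S then S.equivFin ⟨x, hx⟩ else 0
  have hg : Set.InjOn g S := fun x hx y hy hxy => by
    rw [mem_coe] at hx hy
    simpa [g, hx, hy, Fin.val_inj] using hxy
  refine ⟨g, hg, eq_of_subset_of_card_le (fun y hy => ?_) ?_⟩
  · obtain ⟨x, hx, rfl⟩ := mem_image.1 hy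
    simp [g, hx]
  · rw [card_range, card_image_of_injOn hg]

theorem card_image_image (hg : Set.InjOn g S) (h𝒜 : 𝒜 ⊆ powersetCard k S) :
    #(𝒜.image (image g)) = #𝒜 :=
  card_image_of_injOn <| (image_injOn_powerset_of_injOn hg).mono fun _ hA =>
    mem_powerset.2 (mem_powersetCard.1 (h𝒜 hA)).1

theorem image_image_subset_powersetCard (hg : Set.InjOn g S) (h𝒜 : 𝒜 ⊆ powersetCard k S) :
    𝒜.image (image g) ⊆ powersetCard k (S.image g) := by
  intro X hX
  obtain ⟨A, hA, rfl⟩ := mem_image.1 hX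
  obtain ⟨hAS, hAk⟩ := mem_powersetCard.1 (h𝒜 hA)
  exact mem_powersetCard.2
    ⟨image_subset_image hAS, by rw [card_image_of_injOn (hg.mono hAS), hAk]⟩

theorem exists_notMem_image_image (hg : Set.InjOn g S) (h𝒜 : 𝒜 ⊆ powersetCard k S)
    (hne : 𝒜.Nonempty) (hnt : ∀ x, ∃ A ∈ 𝒜, x ∉ A) (y : β) :
    ∃ A ∈ 𝒜.image (image g), y ∉ A := by
  by_cases hy : ∃ x ∈ S, g x = y
  · obtain ⟨x, hxS, rfl⟩ := hy
    obtain ⟨A, hA, hxA⟩ := hnt x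
    have hAS := (mem_powersetCard.1 (h𝒜 hA)).1
    refine ⟨A.image g, mem_image_of_mem _ hA, fun hx => hxA ?_⟩
    obtain ⟨x', hx'A, hx'⟩ := mem_image.1 hx
    rwa [← hg (hAS hx'A) hxS hx']
  · obtain ⟨A, hA⟩ := hne
    refine ⟨A.image g, mem_image_of_mem _ hA, fun hyA => hy ?_⟩
    obtain ⟨x, hxA, rfl⟩ := mem_image.1 hyA
    exact ⟨x, (mem_powersetCard.1 (h𝒜 hA)).1 hxA, rfl⟩

end Relabel

section Compression

open UV

variable [DecidableEq α] {𝒜 ℬ : Finset (Finset α)} {A : Finset α} {i j : α}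

theorem UV.compress_singleton_of_notMem_of_mem (hi : i ∉ A) (hj : j ∈ A) :
    compress {i} {j} A = insert i (A.erase j) := by
  rw [compress_of_disjoint_of_le (disjoint_singleton_left.2 hi) (singleton_subset_iff.2 hj)]
  ext x
  simp only [sup_eq_union, mem_sdiff, mem_union, mem_singleton, mem_insert, mem_erase]
  constructor
  · rintro ⟨hx | rfl, hxj⟩
    exacts [Or.inr ⟨hxj, hx⟩, Or.inl rfl]
  · rintro (rfl | ⟨hxj, hx⟩)
    exacts [⟨Or.inr rfl, by rintro rfl; exact hi hj⟩, ⟨Or.inl hx, hxj⟩]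

theorem UV.compression_ne (hA : A ∈ 𝒜) (hi : i ∉ A) (hj : j ∈ A)
    (h : insert i (A.erase j) ∉ 𝒜) : 𝓒 {i} {j} 𝒜 ≠ 𝒜 := fun heq => h <| by
  rw [← compress_singleton_of_notMem_of_mem hi hj, ← heq]
  exact compress_mem_compression hA

theorem UV.mem_or_of_forall_mem_compression {y : α} (hy : ∀ B ∈ 𝓒 {i} {j} 𝒜, y ∈ B)
    (hA : A ∈ 𝒜) : y ∈ A ∨ y = i ∧ j ∈ A := by
  have hyA := hy _ (compress_mem_compression hA)
  by_cases h : i ∉ A ∧ j ∈ A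
  · rw [compress_singleton_of_notMem_of_mem h.1 h.2, mem_insert] at hyA
    rcases hyA with rfl | hyA
    exacts [Or.inr ⟨rfl, h.2⟩, Or.inl (mem_of_mem_erase hyA)]
  · rw [compress, if_neg (by simpa using h)] at hyA
    exact Or.inl hyA

theorem CrossIntersecting.not_disjoint_of_mem_compression (h : CrossIntersecting 𝒜 ℬ)
    {X Y : Finset α} (hX : X ∈ 𝓒 {i} {j} 𝒜) (hY : Y ∈ ℬ) (hcY : compress {i} {j} Y ∈ ℬ) :
    ¬Disjoint X Y := by
  by_cases hX𝒜 : X ∈ 𝒜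
  · exact h X hX𝒜 Y hY
  have hiX : i ∈ X := singleton_subset_iff.1 (le_of_mem_compression_of_notMem hX hX𝒜)
  have hA := sup_sdiff_mem_of_mem_compression_of_notMem hX hX𝒜
  intro hXY
  have hiY : i ∉ Y := disjoint_left.1 hXY hiX
  -- `X` is `A` with `j` replaced by `i`, so `A` can only meet `Y` in `j` ...
  obtain ⟨z, hzA, hzY⟩ := not_disjoint_iff.1 (h _ hA Y hY)
  have hjY : j ∈ Y := by
    simp only [sup_eq_union, mem_sdiff, mem_union, mem_singleton] at hzA
    rcases hzA.1 with hzX | rfl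
    exacts [absurd hzY (disjoint_left.1 hXY hzX), hzY]
  -- ... and then `A` misses the shift of `Y`.
  rw [compress_singleton_of_notMem_of_mem hiY hjY] at hcY
  obtain ⟨w, hwA, hwY⟩ := not_disjoint_iff.1 (h _ hA _ hcY)
  simp only [sup_eq_union, mem_sdiff, mem_union, mem_singleton, mem_insert, mem_erase] at hwA hwY
  rcases hwY with rfl | ⟨hwj, hwY⟩
  · exact hwA.2 rfl
  · exact disjoint_left.1 hXY (hwA.1.resolve_right hwj) hwY

theorem CrossIntersecting.compression (h : CrossIntersecting 𝒜 ℬ) :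
    CrossIntersecting (𝓒 {i} {j} 𝒜) (𝓒 {i} {j} ℬ) := by
  intro X hX Y hY
  rcases mem_compression.1 hY with ⟨hYℬ, hcY⟩ | ⟨hYℬ, -⟩
  · exact h.not_disjoint_of_mem_compression hX hYℬ hcY
  rcases mem_compression.1 hX with ⟨hX𝒜, hcX⟩ | ⟨hX𝒜, -⟩
  · exact fun hd => h.symm.not_disjoint_of_mem_compression hY hX𝒜 hcX hd.symm
  · exact not_disjoint_iff.2
      ⟨i, singleton_subset_iff.1 (le_of_mem_compression_of_notMem hX hX𝒜),
        singleton_subset_iff.1 (le_of_mem_compression_of_notMem hY hYℬ)⟩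

end Compression

section Shifting

open UV

variable {𝒜 ℬ : Finset (Finset ℕ)} {i j : ℕ}

/-- The sum of `2 ^ x` over a set is strictly monotone for colex, in which a shift goes down. -/
theorem UV.sum_sum_two_pow_compression_lt (hij : i < j) (h : 𝓒 {i} {j} 𝒜 ≠ 𝒜) :
    ∑ A ∈ 𝓒 {i} {j} 𝒜, ∑ x ∈ A, 2 ^ x < ∑ A ∈ 𝒜, ∑ x ∈ A, 2 ^ x := by
  have hmoved : {A ∈ 𝒜 | compress {i} {j} A ∉ 𝒜}.Nonempty := by
    contrapose! h
    rw [compression, filter_image, h, image_empty, union_empty]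
    exact filter_true_of_mem fun A hA => by_contra fun hc =>
      (eq_empty_iff_forall_notMem.1 h) A (mem_filter.2 ⟨hA, hc⟩)
  rw [compression, sum_union compress_disjoint, filter_image, sum_image compress_injOn,
    ← sum_filter_add_sum_filter_not 𝒜 (compress {i} {j} · ∈ 𝒜), add_lt_add_iff_left]
  refine sum_lt_sum_of_nonempty hmoved fun A hA => ?_
  have hne : compress {i} {j} A ≠ A := fun heq =>
    (mem_filter.1 hA).2 (heq.symm ▸ (mem_filter.1 hA).1)
  rw [geomSum_lt_geomSum_iff_toColex_lt_toColex le_rfl]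
  exact toColex_compress_lt_toColex (hU := singleton_nonempty i) (hV := singleton_nonempty j)
    (by simpa using hij) hne

theorem UV.sum_sum_two_pow_compression_le (hij : i < j) (𝒜 : Finset (Finset ℕ)) :
    ∑ A ∈ 𝓒 {i} {j} 𝒜, ∑ x ∈ A, 2 ^ x ≤ ∑ A ∈ 𝒜, ∑ x ∈ A, 2 ^ x := by
  by_cases h : 𝓒 {i} {j} 𝒜 = 𝒜
  · rw [h]
  · exact (sum_sum_two_pow_compression_lt hij h).le

theorem UV.compression_subset_powersetCard_range {k n : ℕ} (hij : i < j)
    (h𝒜 : 𝒜 ⊆ powersetCard k (range n)) : 𝓒 {i} {j} 𝒜 ⊆ powersetCard k (range n) := by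
  intro X hX
  rcases mem_compression.1 hX with ⟨hX𝒜, -⟩ | ⟨-, A, hA, rfl⟩
  · exact h𝒜 hX𝒜
  obtain ⟨hAS, hAk⟩ := mem_powersetCard.1 (h𝒜 hA)
  refine mem_powersetCard.2 ⟨?_, by rw [card_compress (by simp), hAk]⟩
  by_cases hc : i ∉ A ∧ j ∈ A
  · rw [compress_singleton_of_notMem_of_mem hc.1 hc.2]
    exact insert_subset (mem_range.2 (hij.trans (mem_range.1 (hAS hc.2))))
      ((erase_subset _ _).trans hAS)
  · rwa [compress, if_neg (by simpa using hc)]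

def IsShifted (𝒜 : Finset (Finset ℕ)) : Prop :=
  ∀ A ∈ 𝒜, ∀ ⦃i j⦄, i < j → i ∉ A → j ∈ A → insert i (A.erase j) ∈ 𝒜

theorem shifting_induction {motive : Finset (Finset ℕ) → Finset (Finset ℕ) → Prop}
    (shifted : ∀ 𝒜 ℬ, IsShifted 𝒜 → IsShifted ℬ → motive 𝒜 ℬ)
    (step : ∀ 𝒜 ℬ i j, i < j → motive (𝓒 {i} {j} 𝒜) (𝓒 {i} {j} ℬ) → motive 𝒜 ℬ)
    (𝒜 ℬ : Finset (Finset ℕ)) : motive 𝒜 ℬ := by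
  by_cases h : IsShifted 𝒜 ∧ IsShifted ℬ
  · exact shifted 𝒜 ℬ h.1 h.2
  obtain ⟨i, j, hij, hne⟩ : ∃ i j, i < j ∧ (𝓒 {i} {j} 𝒜 ≠ 𝒜 ∨ 𝓒 {i} {j} ℬ ≠ ℬ) := by
    simp only [IsShifted, not_and_or, not_forall, exists_prop] at h
    rcases h with ⟨A, hA, i, j, hij, hi, hj, hA'⟩ | ⟨B, hB, i, j, hij, hi, hj, hB'⟩
    exacts [⟨i, j, hij, Or.inl (compression_ne hA hi hj hA')⟩,
      ⟨i, j, hij, Or.inr (compression_ne hB hi hj hB')⟩]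
  exact step 𝒜 ℬ i j hij (shifting_induction shifted step _ _)
termination_by (∑ A ∈ 𝒜, ∑ x ∈ A, 2 ^ x) + ∑ B ∈ ℬ, ∑ x ∈ B, 2 ^ x
decreasing_by
  have h𝒜 := sum_sum_two_pow_compression_le hij 𝒜
  have hℬ := sum_sum_two_pow_compression_le hij ℬ
  rcases hne with hne | hne
  · have := sum_sum_two_pow_compression_lt hij hne; omega
  · have := sum_sum_two_pow_compression_lt hij hne; omega

end Shifting

namespace IsShifted

variable {𝒜 ℬ : Finset (Finset ℕ)} {S : Finset ℕ} {k m : ℕ}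

theorem mem_of_forall_lt (h : IsShifted 𝒜) {A T : Finset ℕ} (hA : A ∈ 𝒜) (hT : #T = #A)
    (hlt : ∀ i ∈ T, ∀ j ∈ A, j ∉ T → i < j) : T ∈ 𝒜 := by
  obtain ⟨d, hd⟩ : ∃ d, #(A \ T) = d := ⟨_, rfl⟩
  induction d generalizing A with
  | zero =>
    rw [card_eq_zero, sdiff_eq_empty_iff_subset] at hd
    rwa [← eq_of_subset_of_card_le hd hT.le]
  | succ d ih =>
    obtain ⟨j, hj⟩ := card_pos.1 (by omega : 0 < #(A \ T))
    obtain ⟨i, hi⟩ : (T \ A).Nonempty := sdiff_nonempty.2 fun hTA =>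
      (mem_sdiff.1 hj).2 (eq_of_subset_of_card_le hTA hT.ge ▸ (mem_sdiff.1 hj).1)
    rw [mem_sdiff] at hi hj
    refine ih (h A hA (hlt i hi.1 j hj.1 hj.2) hi.2 hj.1) ?_ (fun i' hi' j' hj' hj'T => ?_) ?_
    · rw [card_insert_of_notMem fun hiA => hi.2 (mem_of_mem_erase hiA), card_erase_of_mem hj.1,
        hT, Nat.sub_add_cancel (card_pos.2 ⟨j, hj.1⟩)]
    · rcases mem_insert.1 hj' with rfl | hj'
      exacts [absurd hi.1 hj'T, hlt i' hi' j' (mem_of_mem_erase hj') hj'T]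
    · have : insert i (A.erase j) \ T = (A \ T).erase j := by
        ext x
        simp only [mem_sdiff, mem_insert, mem_erase]
        constructor
        · rintro ⟨rfl | ⟨hxj, hxA⟩, hxT⟩
          exacts [absurd hi.1 hxT, ⟨hxj, hxA, hxT⟩]
        · rintro ⟨hxj, hxA, hxT⟩
          exact ⟨Or.inr ⟨hxj, hxA⟩, hxT⟩
      rw [this, card_erase_of_mem (mem_sdiff.2 hj), hd, Nat.add_sub_cancel]

theorem range_mem (h : IsShifted 𝒜) (h𝒜 : 𝒜 ⊆ powersetCard k S) (hne : 𝒜.Nonempty) :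
    range k ∈ 𝒜 := by
  obtain ⟨A, hA⟩ := hne
  rw [← (mem_powersetCard.1 (h𝒜 hA)).2]
  exact h.mem_of_forall_lt hA (card_range _) fun i hi j _ hj => by
    rw [mem_range] at hi hj; omega

theorem Ico_one_mem (h : IsShifted 𝒜) (h𝒜 : 𝒜 ⊆ powersetCard k S)
    (hnt : ∀ x, ∃ A ∈ 𝒜, x ∉ A) : Ico 1 (k + 1) ∈ 𝒜 := by
  obtain ⟨A, hA, h0⟩ := hnt 0
  rw [← (mem_powersetCard.1 (h𝒜 hA)).2]
  exact h.mem_of_forall_lt hA (by simp) fun i hi j hj hjT => by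
    have : j ≠ 0 := by rintro rfl; exact h0 hj
    rw [mem_Ico] at hi hjT; omega

theorem zero_mem (h : IsShifted 𝒜) {y : ℕ} (hy : ∀ A ∈ 𝒜, y ∈ A) : ∀ A ∈ 𝒜, 0 ∈ A := by
  intro A hA
  by_contra h0
  have hy0 : y ≠ 0 := by rintro rfl; exact h0 (hy A hA)
  have := hy _ (h A hA (Nat.pos_of_ne_zero hy0) h0 (hy A hA))
  simp [hy0] at this

theorem exists_notMem (h : IsShifted 𝒜) {B : Finset ℕ} (hB : B ∈ 𝒜) (h0 : 0 ∉ B) :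
    ∀ x, ∃ A ∈ 𝒜, x ∉ A := by
  by_contra! hy
  obtain ⟨y, hy⟩ := hy
  exact h0 (h.zero_mem hy B hB)

theorem nonMemberSubfamily (h : IsShifted 𝒜) (h𝒜 : ∀ A ∈ 𝒜, A ⊆ range (m + 1)) :
    IsShifted (𝒜.nonMemberSubfamily m) := by
  simp only [IsShifted, mem_nonMemberSubfamily, mem_insert, mem_erase, not_or, not_and]
  intro A ⟨hA, hmA⟩ i j hij hi hj
  have := mem_range.1 (h𝒜 A hA hj)
  exact ⟨h A hA hij hi hj, by omega, fun _ => hmA⟩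

theorem memberSubfamily (h : IsShifted 𝒜) (h𝒜 : ∀ A ∈ 𝒜, A ⊆ range (m + 1)) :
    IsShifted (𝒜.memberSubfamily m) := by
  intro A hA i j hij hi hj
  obtain ⟨hA𝒜, hmA⟩ := mem_memberSubfamily.1 hA
  have hjm : j < m := lt_of_le_of_ne
    (Nat.lt_succ_iff.1 (mem_range.1 (h𝒜 _ hA𝒜 (mem_insert_of_mem hj))))
    (by rintro rfl; exact hmA hj)
  have hshift := h _ hA𝒜 hij (by simp [hi, (hij.trans hjm).ne]) (mem_insert_of_mem hj)
  rw [erase_insert_of_ne hjm.ne', insert_comm] at hshift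
  exact mem_memberSubfamily.2 ⟨hshift, by simp [hmA, (hij.trans hjm).ne']⟩

end IsShifted

theorem CrossIntersecting.memberSubfamily_of_isShifted {𝒜 ℬ : Finset (Finset ℕ)} {k m : ℕ}
    (h : CrossIntersecting 𝒜 ℬ) (hℬsh : IsShifted ℬ) (h𝒜 : 𝒜 ⊆ powersetCard k (range (m + 1)))
    (hℬ : ℬ ⊆ powersetCard k (range (m + 1))) (hm : 2 * k ≤ m + 1) :
    CrossIntersecting (𝒜.memberSubfamily m) (ℬ.memberSubfamily m) := by
  intro X hX Y hY hXY
  have hX' := memberSubfamily_subset_powersetCard h𝒜 hX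
  have hY' := memberSubfamily_subset_powersetCard hℬ hY
  rw [range_add_one_erase, mem_powersetCard] at hX' hY'
  obtain ⟨hXm, hmX⟩ := mem_memberSubfamily.1 hX
  obtain ⟨hYm, hmY⟩ := mem_memberSubfamily.1 hY
  have hk : 0 < k := by
    have := (mem_powersetCard.1 (h𝒜 hXm)).2
    rw [card_insert_of_notMem hmX] at this; omega
  -- a point `c < m` outside `X ∪ Y`; shifting `m` to `c` in `insert m Y` leaves `insert c Y`,
  -- which misses `insert m X`
  obtain ⟨c, hc, hcXY⟩ : ∃ c ∈ range m, c ∉ X ∪ Y := exists_mem_notMem_of_card_lt_card <| by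
    rw [card_union_of_disjoint hXY, hX'.2, hY'.2, card_range]; omega
  rw [mem_range] at hc
  rw [mem_union, not_or] at hcXY
  have hcY := hℬsh _ hYm hc (by simp [hc.ne, hcXY.2]) (mem_insert_self m Y)
  rw [erase_insert hmY] at hcY
  refine h _ hXm _ hcY (disjoint_left.2 fun z hzX hzY => ?_)
  rcases mem_insert.1 hzX with rfl | hzX
  · rcases mem_insert.1 hzY with hzc | hzY
    exacts [hc.ne' hzc, hmY hzY]
  · rcases mem_insert.1 hzY with rfl | hzY
    exacts [hcXY.1 hzX, disjoint_left.1 hXY hzX hzY]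

section FranklTokushige

variable {𝒜 ℬ : Finset (Finset ℕ)} {m a : ℕ}

theorem CrossIntersecting.card_memberSubfamily_add_choose_le (h : CrossIntersecting 𝒜 ℬ)
    (h𝒜 : 𝒜 ⊆ powersetCard a (range (m + 1))) (hℬ : range a ∈ ℬ) (ha : a ≤ m) :
    #(𝒜.memberSubfamily m) + (m - a).choose (a - 1) ≤ m.choose (a - 1) := by
  have h𝒜₁ := memberSubfamily_subset_powersetCard (a := m) h𝒜
  rw [range_add_one_erase] at h𝒜₁
  simpa using card_add_choose_le_of_forall_not_disjoint (range_subset_range.2 ha) h𝒜₁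
    fun X hX => h.not_disjoint_of_mem_memberSubfamily hℬ (by simp; omega) hX

theorem CrossIntersecting.card_add_card_add_choose_le_of_isShifted
    (h : CrossIntersecting 𝒜 ℬ) (h𝒜 : 𝒜 ⊆ powersetCard a (range m))
    (hℬ : ℬ ⊆ powersetCard a (range m)) (hm : 2 * a ≤ m) (h𝒜sh : IsShifted 𝒜)
    (hℬsh : IsShifted ℬ) (h𝒜ne : 𝒜.Nonempty) (hℬne : ℬ.Nonempty) :
    #𝒜 + #ℬ + (m - a).choose a ≤ m.choose a + 1 := by
  have ha := h.pos h𝒜 h𝒜ne hℬne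
  induction m generalizing a 𝒜 ℬ with
  | zero => omega
  | succ m ih =>
  rcases hm.eq_or_lt with hm | hm
  · have := h.card_add_card_le_of_card_eq_two_mul h𝒜 hℬ (by rw [card_range, hm])
    rw [show m + 1 - a = a by omega, Nat.choose_self, ← hm]
    omega
  have h𝒜S : ∀ A ∈ 𝒜, A ⊆ range (m + 1) := fun A hA => (mem_powersetCard.1 (h𝒜 hA)).1
  have hℬS : ∀ B ∈ ℬ, B ⊆ range (m + 1) := fun B hB => (mem_powersetCard.1 (hℬ hB)).1
  have h𝒜r := h𝒜sh.range_mem h𝒜 h𝒜ne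
  have hℬr := hℬsh.range_mem hℬ hℬne
  have hmr : m ∉ range a := by simp; omega
  have h𝒜₀ := nonMemberSubfamily_subset_powersetCard (a := m) h𝒜
  have hℬ₀ := nonMemberSubfamily_subset_powersetCard (a := m) hℬ
  have h𝒜₁ := memberSubfamily_subset_powersetCard (a := m) h𝒜
  have hℬ₁ := memberSubfamily_subset_powersetCard (a := m) hℬ
  rw [range_add_one_erase] at h𝒜₀ hℬ₀ h𝒜₁ hℬ₁
  have hbound₀ := ih (𝒜 := 𝒜.nonMemberSubfamily m) (ℬ := ℬ.nonMemberSubfamily m)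
    (h.mono (filter_subset _ _) (filter_subset _ _)) h𝒜₀ hℬ₀ (by omega)
    (h𝒜sh.nonMemberSubfamily h𝒜S) (hℬsh.nonMemberSubfamily hℬS)
    ⟨_, mem_nonMemberSubfamily.2 ⟨h𝒜r, hmr⟩⟩ ⟨_, mem_nonMemberSubfamily.2 ⟨hℬr, hmr⟩⟩ ha
  have hbound₁ : #(𝒜.memberSubfamily m) + #(ℬ.memberSubfamily m) + (m - a).choose (a - 1) ≤
      m.choose (a - 1) := by
    have h𝒜p := h.card_memberSubfamily_add_choose_le h𝒜 hℬr (by omega)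
    have hℬp := h.symm.card_memberSubfamily_add_choose_le hℬ h𝒜r (by omega)
    rcases (𝒜.memberSubfamily m).eq_empty_or_nonempty with h𝒜e | h𝒜e
    · rw [h𝒜e, card_empty]; omega
    rcases (ℬ.memberSubfamily m).eq_empty_or_nonempty with hℬe | hℬe
    · rw [hℬe, card_empty]; omega
    have hx := h.memberSubfamily_of_isShifted hℬsh h𝒜 hℬ (by omega)
    have ha' := hx.pos h𝒜₁ h𝒜e hℬe
    have := ih hx h𝒜₁ hℬ₁ (by omega) (h𝒜sh.memberSubfamily h𝒜S) (hℬsh.memberSubfamily hℬS)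
      h𝒜e hℬe ha'
    have := Nat.choose_lt_choose_succ_left (n := m - a) ha' (by omega)
    rw [show m - a + 1 = m - (a - 1) by omega] at this
    omega
  have := card_memberSubfamily_add_card_nonMemberSubfamily m 𝒜
  have := card_memberSubfamily_add_card_nonMemberSubfamily m ℬ
  rw [Nat.choose_succ_left m a ha, show m + 1 - a = m - a + 1 by omega,
    Nat.choose_succ_left (m - a) a ha]
  omega

open UV in
theorem CrossIntersecting.card_add_card_add_choose_le_range (h : CrossIntersecting 𝒜 ℬ)
    (h𝒜 : 𝒜 ⊆ powersetCard a (range m)) (hℬ : ℬ ⊆ powersetCard a (range m)) (hm : 2 * a ≤ m)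
    (h𝒜ne : 𝒜.Nonempty) (hℬne : ℬ.Nonempty) : #𝒜 + #ℬ + (m - a).choose a ≤ m.choose a + 1 := by
  induction 𝒜, ℬ using shifting_induction with
  | shifted 𝒜 ℬ h𝒜sh hℬsh =>
    exact h.card_add_card_add_choose_le_of_isShifted h𝒜 hℬ hm h𝒜sh hℬsh h𝒜ne hℬne
  | step 𝒜 ℬ i j hij ih =>
    simpa using ih h.compression (compression_subset_powersetCard_range hij h𝒜)
      (compression_subset_powersetCard_range hij hℬ) (by simpa [← card_pos] using h𝒜ne)
      (by simpa [← card_pos] using hℬne)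

end FranklTokushige

theorem CrossIntersecting.card_add_card_add_choose_le {𝒜 ℬ : Finset (Finset α)}
    {S : Finset α} {a : ℕ} (h : CrossIntersecting 𝒜 ℬ) (h𝒜 : 𝒜 ⊆ powersetCard a S)
    (hℬ : ℬ ⊆ powersetCard a S) (hS : 2 * a ≤ #S) (h𝒜ne : 𝒜.Nonempty) (hℬne : ℬ.Nonempty) :
    #𝒜 + #ℬ + (#S - a).choose a ≤ (#S).choose a + 1 := by
  obtain ⟨g, hg, hgS⟩ := exists_injOn_image_eq_range S
  have h𝒜' := image_image_subset_powersetCard hg h𝒜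
  have hℬ' := image_image_subset_powersetCard hg hℬ
  rw [hgS] at h𝒜' hℬ'
  have := (h.image_image g).card_add_card_add_choose_le_range h𝒜' hℬ' hS (h𝒜ne.image _)
    (hℬne.image _)
  rwa [card_image_image hg h𝒜, card_image_image hg hℬ] at this

theorem hilton_milner_of_forall_mem_or_mem [DecidableEq α] {𝒜 : Finset (Finset α)}
    {S : Finset α} {k : ℕ} {i j : α} (hij : i ≠ j) (h𝒜 : 𝒜 ⊆ powersetCard k S)
    (hS : 2 * k < #S) (h : CrossIntersecting 𝒜 𝒜) (hnt : ∀ x, ∃ A ∈ 𝒜, x ∉ A)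
    (hcover : ∀ A ∈ 𝒜, i ∈ A ∨ j ∈ A) :
    #𝒜 + (#S - k - 1).choose (k - 1) ≤ (#S - 1).choose (k - 1) + 1 := by
  obtain ⟨P, hP, hjP⟩ := hnt j
  have hiP := (hcover P hP).resolve_right hjP
  obtain ⟨Q, hQ, hiQ⟩ := hnt i
  have hjQ := (hcover Q hQ).resolve_left hiQ
  have hS' : #((S.erase i).erase j) = #S - 2 := by
    rw [card_erase_of_mem (mem_erase.2 ⟨hij.symm, (mem_powersetCard.1 (h𝒜 hQ)).1 hjQ⟩),
      card_erase_of_mem ((mem_powersetCard.1 (h𝒜 hP)).1 hiP)]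
    omega
  have hsplit := card_eq_of_forall_mem_or_mem hcover
  set 𝒳 := (𝒜.memberSubfamily i).nonMemberSubfamily j
  set 𝒴 := (𝒜.nonMemberSubfamily i).memberSubfamily j
  have h𝒳 : 𝒳 ⊆ powersetCard (k - 1) ((S.erase i).erase j) :=
    nonMemberSubfamily_subset_powersetCard (memberSubfamily_subset_powersetCard h𝒜)
  have h𝒴 : 𝒴 ⊆ powersetCard (k - 1) ((S.erase i).erase j) :=
    memberSubfamily_subset_powersetCard (nonMemberSubfamily_subset_powersetCard h𝒜)
  have h𝒳ne : 𝒳.Nonempty := ⟨P.erase i, by simp [𝒳, insert_erase hiP, hP, hjP]⟩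
  have h𝒴ne : 𝒴.Nonempty := ⟨Q.erase j, by simp [𝒴, insert_erase hjQ, hQ, hiQ]⟩
  have h𝒳𝒴 : CrossIntersecting 𝒳 𝒴 := h.memberSubfamily_nonMemberSubfamily
  have hk := h𝒳𝒴.pos h𝒳 h𝒳ne h𝒴ne
  have hFT := h𝒳𝒴.card_add_card_add_choose_le h𝒳 h𝒴 (by omega) h𝒳ne h𝒴ne
  rw [hS', show #S - 2 - (k - 1) = #S - k - 1 by omega] at hFT
  have hboth := card_le_card (memberSubfamily_subset_powersetCard (a := j)
    (memberSubfamily_subset_powersetCard (a := i) h𝒜))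
  rw [card_powersetCard, hS'] at hboth
  rw [hsplit, show #S - 1 = #S - 2 + 1 by omega,
    Nat.choose_succ_left _ _ hk]
  omega

theorem hilton_milner_of_isShifted {n k : ℕ} {𝒜 : Finset (Finset ℕ)}
    (h𝒜 : 𝒜 ⊆ powersetCard k (range n)) (hn : 2 * k < n) (h : CrossIntersecting 𝒜 𝒜)
    (hsh : IsShifted 𝒜) (hnt : ∀ x, ∃ A ∈ 𝒜, x ∉ A) :
    #𝒜 + (n - k - 1).choose (k - 1) ≤ (n - 1).choose (k - 1) + 1 := by
  induction n generalizing k 𝒜 with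
  | zero => omega
  | succ m ih =>
  have hk := h.two_le h𝒜 hnt
  have h𝒜S : ∀ A ∈ 𝒜, A ⊆ range (m + 1) := fun A hA => (mem_powersetCard.1 (h𝒜 hA)).1
  have hB₀ := hsh.Ico_one_mem h𝒜 hnt
  have hmB₀ : m ∉ Ico 1 (k + 1) := by simp; omega
  have h0B₀ : 0 ∉ Ico 1 (k + 1) := by simp
  have h𝒜₀ := nonMemberSubfamily_subset_powersetCard (a := m) h𝒜
  have h𝒜₁ := memberSubfamily_subset_powersetCard (a := m) h𝒜
  rw [range_add_one_erase] at h𝒜₀ h𝒜₁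
  have hx₀ : CrossIntersecting (𝒜.nonMemberSubfamily m) (𝒜.nonMemberSubfamily m) :=
    h.mono (filter_subset _ _) (filter_subset _ _)
  have hbound₀ : #(𝒜.nonMemberSubfamily m) + (m - k - 1).choose (k - 1) ≤
      (m - 1).choose (k - 1) + 1 := by
    rcases (show 2 * k ≤ m by omega).eq_or_lt with hm | hm
    · have := hx₀.card_le_of_card_eq_two_mul h𝒜₀ (by rw [card_range, hm]) (by omega)
      rw [show m - k - 1 = k - 1 by omega, show m - 1 = 2 * k - 1 by omega, Nat.choose_self]
      omega
    exact ih h𝒜₀ hm hx₀ (hsh.nonMemberSubfamily h𝒜S)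
      ((hsh.nonMemberSubfamily h𝒜S).exists_notMem (mem_nonMemberSubfamily.2 ⟨hB₀, hmB₀⟩) h0B₀)
  have hbound₁ : #(𝒜.memberSubfamily m) + (m - k - 1).choose (k - 2) ≤
      (m - 1).choose (k - 2) := by
    have hmeet := fun X (hX : X ∈ 𝒜.memberSubfamily m) =>
      h.not_disjoint_of_mem_memberSubfamily hB₀ hmB₀ hX
    by_cases hstar : ∃ y, ∀ X ∈ 𝒜.memberSubfamily m, y ∈ X
    · obtain ⟨y, hy⟩ := hstar
      have := card_add_choose_le_of_forall_mem_not_disjoint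
        (fun x hx => by simp at hx ⊢; omega) (by simp; omega) h0B₀ h𝒜₁
        ((hsh.memberSubfamily h𝒜S).zero_mem hy) hmeet
      simpa [show m - 1 - k = m - k - 1 by omega, show k - 1 - 1 = k - 2 by omega] using this
    push Not at hstar
    have hx₁ := h.memberSubfamily_of_isShifted hsh h𝒜 h𝒜 (by omega)
    have hk₁ := hx₁.two_le h𝒜₁ hstar
    have := ih h𝒜₁ (by omega) hx₁ (hsh.memberSubfamily h𝒜S) hstar
    have := Nat.choose_lt_choose_succ_left (n := m - k - 1) (k := k - 2) (by omega) (by omega)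
    rw [show m - (k - 1) - 1 = m - k - 1 + 1 by omega, show k - 1 - 1 = k - 2 by omega] at *
    omega
  have := card_memberSubfamily_add_card_nonMemberSubfamily m 𝒜
  rw [show m + 1 - k - 1 = m - k - 1 + 1 by omega, Nat.choose_succ_left _ _ (by omega),
    Nat.add_sub_cancel, show m = m - 1 + 1 by omega, Nat.choose_succ_left _ _ (by omega),
    show m - 1 + 1 = m by omega, show k - 1 - 1 = k - 2 by omega]
  omega

open UV in
theorem hilton_milner_range {n k : ℕ} {𝒜 : Finset (Finset ℕ)}
    (h𝒜 : 𝒜 ⊆ powersetCard k (range n)) (hn : 2 * k < n) (h : CrossIntersecting 𝒜 𝒜)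
    (hnt : ∀ x, ∃ A ∈ 𝒜, x ∉ A) :
    #𝒜 + (n - k - 1).choose (k - 1) ≤ (n - 1).choose (k - 1) + 1 := by
  refine shifting_induction (motive := fun 𝒜 _ => 𝒜 ⊆ powersetCard k (range n) →
      CrossIntersecting 𝒜 𝒜 → (∀ x, ∃ A ∈ 𝒜, x ∉ A) →
      #𝒜 + (n - k - 1).choose (k - 1) ≤ (n - 1).choose (k - 1) + 1)
    (fun 𝒜 _ hsh _ h𝒜 h hnt => hilton_milner_of_isShifted h𝒜 hn h hsh hnt)
    (fun 𝒜 _ i j hij ih h𝒜 h hnt => ?_) 𝒜 𝒜 h𝒜 h hnt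
  by_cases hstar : ∃ y, ∀ B ∈ 𝓒 {i} {j} 𝒜, y ∈ B
  · -- a shift can only create a common element `i`, and only if every member meets `{i, j}`
    obtain ⟨y, hy⟩ := hstar
    have hcover := fun A (hA : A ∈ 𝒜) => mem_or_of_forall_mem_compression hy hA
    obtain rfl : y = i := by
      by_contra hyi
      obtain ⟨A, hA, hyA⟩ := hnt y
      exact hyA ((hcover A hA).resolve_right fun h => hyi h.1)
    simpa using hilton_milner_of_forall_mem_or_mem hij.ne h𝒜 (by simpa) h hnt
      fun A hA => (hcover A hA).imp_right And.right
  · push Not at hstar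
    simpa using ih (compression_subset_powersetCard_range hij h𝒜) h.compression hstar

theorem hilton_milner {𝒜 : Finset (Finset α)} {S : Finset α} {k : ℕ}
    (h𝒜 : 𝒜 ⊆ powersetCard k S) (hS : 2 * k < #S) (h : CrossIntersecting 𝒜 𝒜)
    (hnt : ∀ x, ∃ A ∈ 𝒜, x ∉ A) :
    #𝒜 + (#S - k - 1).choose (k - 1) ≤ (#S - 1).choose (k - 1) + 1 := by
  obtain ⟨g, hg, hgS⟩ := exists_injOn_image_eq_range S
  have h𝒜' := image_image_subset_powersetCard hg h𝒜
  rw [hgS] at h𝒜'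
  obtain ⟨x, -⟩ := card_pos.1 (by omega : 0 < #S)
  obtain ⟨A, hA, -⟩ := hnt x
  have := hilton_milner_range h𝒜' hS (h.image_image g)
    (exists_notMem_image_image hg h𝒜 ⟨A, hA⟩ hnt)
  rwa [card_image_image hg h𝒜] at this

theorem card_add_choose_le_of_crossIntersecting_insert [DecidableEq α] {𝒜 : Finset (Finset α)}
    {S B C : Finset α} {k : ℕ} (h𝒜 : 𝒜 ⊆ powersetCard k S) (hB : B ∈ powersetCard k S)
    (hC : C ∈ powersetCard k S) (hS : 2 * k < #S) (hBC : Disjoint B C)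
    (h : CrossIntersecting (insert B 𝒜) (insert B 𝒜)) (hmeet : ∀ A ∈ 𝒜, ¬Disjoint A C) :
    #𝒜 + (#S - k - 1).choose (k - 1) ≤ (#S - 1).choose (k - 1) := by
  by_cases hstar : ∃ y, ∀ A ∈ insert B 𝒜, y ∈ A
  · obtain ⟨y, hy⟩ := hstar
    have hyB := hy B (mem_insert_self B 𝒜)
    have := card_add_choose_le_of_forall_mem_not_disjoint (mem_powersetCard.1 hC).1
      ((mem_powersetCard.1 hB).1 hyB) (disjoint_left.1 hBC hyB) h𝒜
      (fun A hA => hy A (mem_insert_of_mem hA)) hmeet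
    rwa [(mem_powersetCard.1 hC).2, Nat.sub_right_comm] at this
  · push Not at hstar
    have := hilton_milner (insert_subset hB h𝒜) hS h hstar
    rw [card_insert_of_notMem fun hB𝒜 => hmeet B hB𝒜 hBC] at this
    omega

theorem FreeIndep.exists_adj {V : Type*} {G : SimpleGraph V} {F : Set V}
    (hF : FreeIndep G F) : ∃ u v, G.Adj u v ∧ ∀ w ∈ F, ¬G.Adj w u ∧ ¬G.Adj w v := by
  obtain ⟨-, M₁, M₂, hne, hF₁, hF₂, hM₁, hM₂⟩ := hF
  obtain ⟨u, hu₁, hu₂⟩ := Set.not_subset.1 fun h₁₂ => hne (le_antisymm h₁₂ (hM₁.2 hM₂.1 h₁₂))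
  obtain ⟨v, hv₂, huv⟩ : ∃ v ∈ M₂, G.Adj u v := by
    by_contra! hnadj
    refine hu₂ (hM₂.mem_of_prop_insert fun a ha b hb hab => ?_)
    rcases ha with rfl | ha <;> rcases hb with rfl | hb
    · exact G.loopless.irrefl _ hab
    · exact hnadj b hb hab
    · exact hnadj a ha hab.symm
    · exact hM₂.1 ha hb hab
  exact ⟨u, v, huv, fun w hw => ⟨hM₁.1 (hF₁ hw) hu₁, hM₂.1 (hF₂ hw) hv₂⟩⟩

theorem IsIndep.insert {V : Type*} {G : SimpleGraph V} {S : Set V} {u : V}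
    (hS : IsIndep G S) (hu : ∀ w ∈ S, ¬G.Adj w u) : IsIndep G (insert u S) := by
  rintro v (rfl | hv) w (rfl | hw)
  · exact G.loopless.irrefl _
  · exact fun h => hu w hw h.symm
  · exact hu v hv
  · exact hS hv hw

theorem not_disjoint_of_not_kneser_adj {n k : ℕ} (hk : 0 < k)
    {A B : {A : Finset (Fin n) // A.card = k}} (h : ¬(kneser n k).Adj A B) :
    ¬Disjoint A.1 B.1 := fun hAB => h ⟨hAB, by
  rintro rfl
  have := A.2
  rw [disjoint_self_iff_empty _ |>.1 hAB, card_empty] at this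
  omega⟩

theorem IsIndep.crossIntersecting_kneser {n k : ℕ} (hk : 0 < k)
    {I : Finset {A : Finset (Fin n) // A.card = k}} (hI : IsIndep (kneser n k) I) :
    CrossIntersecting (I.map (Function.Embedding.subtype _))
      (I.map (Function.Embedding.subtype _)) := by
  simp only [CrossIntersecting, mem_map, forall_exists_index, and_imp]
  rintro _ A hA rfl _ A' hA' rfl
  exact not_disjoint_of_not_kneser_adj hk (hI hA hA')

theorem freeIndep_card_le (n k : ℕ) (hk : 0 < k) (hn : 2 * k < n)
    (F : Finset {A : Finset (Fin n) // A.card = k})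
    (hF : FreeIndep (kneser n k) (F : Set {A : Finset (Fin n) // A.card = k})) :
    F.card ≤ (n - 1).choose (k - 1) - (n - k - 1).choose (k - 1) := by
  obtain ⟨B, C, hBC, hBCF⟩ := hF.exists_adj
  have hinter := IsIndep.crossIntersecting_kneser hk (I := insert B F)
    (by rw [coe_insert]; exact hF.1.insert fun w hw => (hBCF w hw).1)
  rw [map_insert] at hinter
  have hF𝒜 : F.map (Function.Embedding.subtype _) ⊆ powersetCard k univ := fun A hA => by
    obtain ⟨A, -, rfl⟩ := mem_map.1 hA
    simpa using A.2
  have := card_add_choose_le_of_crossIntersecting_insert hF𝒜 (by simpa using B.2)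
    (by simpa using C.2) (by simpa) hBC.1 hinter fun A hA => by
      obtain ⟨A', hA', rfl⟩ := mem_map.1 hA
      exact not_disjoint_of_not_kneser_adj hk (hBCF A' hA').2
  simp only [card_map, card_univ, Fintype.card_fin] at this
  omega
end

section
/- For n > 2k ≥ 4, we have C(n-1, k-1) - C(n-k-1, k-1) ≤ k·C(n-2, k-2). -/
/-- Each Pascal step from `a` up to `b` adds some `i.choose s` with `i < b`, and there are `b - a`
such steps. -/
theorem Nat.choose_succ_le_choose_succ_add_mul {a b : ℕ} (s : ℕ) (hab : a ≤ b) :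
    b.choose (s + 1) ≤ a.choose (s + 1) + (b - a) * (b - 1).choose s := by
  induction b, hab using Nat.le_induction with
  | base => simp
  | succ b hab ih =>
    have hmono : (b - 1).choose s ≤ b.choose s := Nat.choose_le_choose s (Nat.sub_le b 1)
    have hlen : b + 1 - a = (b - a) + 1 := by omega
    calc (b + 1).choose (s + 1) = b.choose s + b.choose (s + 1) := Nat.choose_succ_succ b s
      _ ≤ b.choose s + (a.choose (s + 1) + (b - a) * (b - 1).choose s) := by gcongr
      _ ≤ b.choose s + (a.choose (s + 1) + (b - a) * b.choose s) := by gcongr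
      _ = a.choose (s + 1) + (b + 1 - a) * (b + 1 - 1).choose s := by
        rw [hlen, Nat.add_sub_cancel]; ring

theorem choose_diff_le_general (n k : ℕ) (hk : 2 ≤ k) :
    (n - 1).choose (k - 1) - (n - k - 1).choose (k - 1) ≤ k * (n - 2).choose (k - 2) := by
  have key := Nat.choose_succ_le_choose_succ_add_mul (k - 2) (show n - k - 1 ≤ n - 1 by omega)
  rw [show k - 2 + 1 = k - 1 by omega, show n - 1 - 1 = n - 2 by omega] at key
  have hsteps : n - 1 - (n - k - 1) ≤ k := by omega
  calc (n - 1).choose (k - 1) - (n - k - 1).choose (k - 1)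
      ≤ (n - 1 - (n - k - 1)) * (n - 2).choose (k - 2) := Nat.sub_le_iff_le_add'.mpr key
    _ ≤ k * (n - 2).choose (k - 2) := by gcongr

theorem choose_diff_le (n k : ℕ) (hk : 2 ≤ k) (hn : 2 * k < n) :
    (n - 1).choose (k - 1) - (n - k - 1).choose (k - 1) ≤ k * (n - 2).choose (k - 2) :=
  choose_diff_le_general n k hk
end

section
/- Let G be a graph with χ_c(G) = n/d, gcd(n,d) = 1 and d ≥ 2 (equivalently χ_c(G) ≠ χ(G)). Then the free chromatic number satisfies φ(G) ≤ 2χ(G) - 1. -/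
/-- The circular complete graph `K_{n/d}`: vertex set `[n]`, with `i ~ j` iff
`d ≤ |i - j| ≤ n - d`. -/
def circK (n d : ℕ) : SimpleGraph (Fin n) where
  Adj i j := i ≠ j ∧ (d : ℤ) ≤ |(i : ℤ) - (j : ℤ)| ∧ |(i : ℤ) - (j : ℤ)| ≤ (n : ℤ) - d
  symm := by
    constructor
    rintro i j ⟨hne, h1, h2⟩
    rw [abs_sub_comm] at h1 h2
    exact ⟨hne.symm, h1, h2⟩
  loopless := by constructor; rintro i ⟨hne, -⟩; exact hne rfl

/-- The circular chromatic number: the infimum of `n/d` over all pairs `(n, d)`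
such that `G` admits a homomorphism to the circular complete graph `K_{n/d}`. -/
noncomputable def circChrom {V : Type*} (G : SimpleGraph V) : ℝ :=
  sInf {r : ℝ | ∃ n d : ℕ, 0 < d ∧ d ≤ n ∧ Nonempty (G →g circK n d) ∧ r = (n : ℝ) / (d : ℝ)}

/-- The free chromatic number `φ(G)`: the minimum number of parts in a partition of
`V(G)` into free independent sets (`⊤` if there is no such partition). -/
noncomputable def freeChrom (V : Type*) [Fintype V] [DecidableEq V]
    (G : SimpleGraph V) : ℕ∞ :=
  sInf {m : ℕ∞ | ∃ P : Finset (Finset V), (P.card : ℕ∞) = m ∧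
    (∀ F ∈ P, FreeIndep G (F : Set V)) ∧
    (P : Set (Finset V)).PairwiseDisjoint id ∧ P.sup id = Finset.univ}

/-!
The infimum defining `χ_c(G) = n/d` is attained (by compactness of circular colourings), giving a
homomorphism `f : G → K_{n/d}`. Optimality forces every colour `b` to be the tail of a tight edge
`uv`, i.e. `f v = f u + d`: otherwise refining each colour `x` to `n x + ε x`, with `ε` increasing
along the cycle `b + d, b + 2d, …, b` (which visits every colour since `gcd(n, d) = 1`), maps `G`
into `K_{n²/(nd+1)}`, and `n²/(nd+1) < n/d`. Cut the colours into blocks of `d - 1` consecutive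
ones; adding either end of the tight edge starting just before a block keeps the block inside an
arc of `d` colours, which is independent, so every block is free. As `d ∤ n`, `n < χ(G) d`, which
bounds the number `⌈n/(d-1)⌉` of blocks by `2χ(G) - 1`.
-/

open Finset

lemma ZMod.val_sub_one_lt {n : ℕ} [NeZero n] {z : ZMod n} (hz : z ≠ 0) : (z - 1).val < z.val := by
  have hn : n ≠ 1 := by
    rintro rfl
    exact hz (Subsingleton.elim _ _)
  have hz' : 1 ≤ z.val := Nat.one_le_iff_ne_zero.2 ((ZMod.val_ne_zero z).2 hz)
  rw [ZMod.val_sub (by rwa [ZMod.val_one'' hn]), ZMod.val_one'' hn]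
  omega

lemma Int.emod_lt_of_modEq {n : ℕ} {x y d : ℤ} (h : x ≡ y [ZMOD n]) (hy : 0 ≤ y) (hyd : y < d) :
    x % n < d := by
  rw [h, Int.emod_def]
  have := mul_nonneg (Int.natCast_nonneg n) (Int.ediv_nonneg hy (Int.natCast_nonneg n))
  linarith

lemma Nat.sub_one_div_sub_one_lt {n d k : ℕ} (hd : 2 ≤ d) (hn : n < k * d) :
    (n - 1) / (d - 1) < 2 * k - 1 := by
  obtain ⟨e, rfl⟩ : ∃ e, d = e + 2 := ⟨d - 2, by omega⟩
  obtain ⟨j, rfl⟩ : ∃ j, k = j + 1 := ⟨k - 1, by rcases k with _ | k <;> simp_all⟩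
  rw [Nat.div_lt_iff_lt_mul (by omega)]
  rw [show 2 * (j + 1) - 1 = 2 * j + 1 by omega, show e + 2 - 1 = e + 1 by omega]
  rcases Nat.eq_zero_or_pos n with rfl | hn0
  · positivity
  have : n - 1 + 2 ≤ (j + 1) * (e + 2) := by omega
  nlinarith

section

variable {V : Type*} {G : SimpleGraph V} {n d : ℕ}

lemma circK_adj_iff_emod (hd : 0 < d) {i j : Fin n} :
    (circK n d).Adj i j ↔ (d : ℤ) ≤ ((i : ℤ) - j) % n ∧ ((i : ℤ) - j) % n ≤ n - d := by
  have hi := i.isLt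
  have hj := j.isLt
  have hmod : ((i : ℤ) - j) % n = if (j : ℤ) ≤ i then (i : ℤ) - j else (i : ℤ) - j + n := by
    split_ifs
    · exact Int.emod_eq_of_lt (by omega) (by omega)
    · rw [Int.emod_eq_add_self_emod, Int.emod_eq_of_lt (by omega) (by omega)]
  simp only [circK, hmod, Ne, Fin.ext_iff]
  split_ifs <;> rcases abs_cases ((i : ℤ) - j) with ⟨h, _⟩ | ⟨h, _⟩ <;> rw [h] <;> omega

lemma circK_one_adj_iff {i j : Fin n} : (circK n 1).Adj i j ↔ i ≠ j := by
  have hi := i.isLt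
  have hj := j.isLt
  simp only [circK, Ne, Fin.ext_iff]
  rcases abs_cases ((i : ℤ) - j) with ⟨h, _⟩ | ⟨h, _⟩ <;> rw [h] <;> omega

lemma two_mul_le_of_circK_adj {i j : Fin n} (h : (circK n d).Adj i j) : 2 * d ≤ n := by
  obtain ⟨-, h₁, h₂⟩ := h
  have := h₁.trans h₂
  omega

/-- Colours in a common arc `b, b + 1, …, b + d - 1` of `ℤ / n` are pairwise non-adjacent. -/
lemma circK_not_adj_of_emod_lt (b : ℤ) {i j : Fin n} (hi : ((i : ℤ) - b) % n < d)
    (hj : ((j : ℤ) - b) % n < d) : ¬ (circK n d).Adj i j := by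
  intro h
  have hn : (n : ℤ) ≠ 0 := by have := i.pos; omega
  have hp := Int.emod_nonneg ((i : ℤ) - b) hn
  have hq := Int.emod_nonneg ((j : ℤ) - b) hn
  have hp' := Int.emod_lt_of_pos ((i : ℤ) - b) (by omega : (0 : ℤ) < n)
  have hq' := Int.emod_lt_of_pos ((j : ℤ) - b) (by omega : (0 : ℤ) < n)
  have hdiff : ((i : ℤ) - j) % n = (((i : ℤ) - b) % n - ((j : ℤ) - b) % n) % n := by
    rw [← Int.sub_emod, sub_sub_sub_cancel_right]
  rw [circK_adj_iff_emod (by omega), hdiff] at h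
  rcases le_or_gt (((j : ℤ) - b) % n) (((i : ℤ) - b) % n) with hle | hlt
  · rw [Int.emod_eq_of_lt (by omega) (by omega)] at h
    omega
  · rw [Int.emod_eq_add_self_emod, Int.emod_eq_of_lt (by omega) (by omega)] at h
    omega

lemma circChrom_le_of_hom (f : G →g circK n d) (hd : 0 < d) (hdn : d ≤ n) :
    circChrom G ≤ n / d :=
  csInf_le ⟨0, by rintro _ ⟨N, D, -, -, -, rfl⟩; positivity⟩ ⟨n, d, hd, hdn, ⟨f⟩, rfl⟩

lemma exists_hom_circK_of_circChrom_lt {r : ℝ} (hpos : 0 < circChrom G)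
    (hr : circChrom G < r) :
    ∃ N D : ℕ, 0 < D ∧ D ≤ N ∧ Nonempty (G →g circK N D) ∧ (N : ℝ) / D < r := by
  have hne : {r : ℝ | ∃ N D : ℕ, 0 < D ∧ D ≤ N ∧ Nonempty (G →g circK N D) ∧
      r = (N : ℝ) / D}.Nonempty := by
    by_contra h
    rw [Set.not_nonempty_iff_eq_empty] at h
    simp [circChrom, h] at hpos
  obtain ⟨_, ⟨N, D, hD, hDN, hf, rfl⟩, hlt⟩ := exists_lt_of_csInf_lt hne hr
  exact ⟨N, D, hD, hDN, hf, hlt⟩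

lemma circChrom_eq_one_of_forall_not_adj (h : ∀ u v, ¬ G.Adj u v) : circChrom G = 1 := by
  have hom : G →g circK 1 1 := ⟨fun _ => 0, fun huv => absurd huv (h _ _)⟩
  refine le_antisymm (by simpa using circChrom_le_of_hom hom one_pos le_rfl) ?_
  refine le_csInf ⟨1, 1, 1, one_pos, le_rfl, ⟨hom⟩, by norm_num⟩ ?_
  rintro _ ⟨N, D, hD, hDN, -, rfl⟩
  rw [one_le_div (by positivity)]
  exact_mod_cast hDN

def SimpleGraph.Coloring.toCircK {k : ℕ} (C : G.Coloring (Fin k)) : G →g circK k 1 :=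
  ⟨C, fun h => circK_one_adj_iff.2 (C.valid h)⟩

lemma circChrom_le_of_colorable [Nonempty V] {k : ℕ} (h : G.Colorable k) :
    circChrom G ≤ k := by
  obtain ⟨C⟩ := h
  have hk : 0 < k := (C (Classical.arbitrary V)).pos
  simpa using circChrom_le_of_hom C.toCircK one_pos hk

/-- A colouring by points of the circle `ℝ / ℤ` (represented in `ℝ`) in which adjacent
vertices are at circular distance at least `s`. -/
def IsCircColoring (G : SimpleGraph V) (s : ℝ) (c : V → ℝ) : Prop :=
  ∀ ⦃u v⦄, G.Adj u v → ∀ m : ℤ, s ≤ |c u - c v - m|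

lemma IsCircColoring.mono {s t : ℝ} {c : V → ℝ} (h : IsCircColoring G t c) (hst : s ≤ t) :
    IsCircColoring G s c :=
  fun _ _ huv m => hst.trans (h huv m)

lemma isClosed_setOf_isCircColoring (s : ℝ) :
    IsClosed {c : V → ℝ | IsCircColoring G s c} := by
  simp only [IsCircColoring, Set.ofPred_forall]
  exact isClosed_iInter fun u => isClosed_iInter fun v => isClosed_iInter fun _ =>
    isClosed_iInter fun m => isClosed_le continuous_const (by fun_prop)

lemma isCircColoring_of_hom (f : G →g circK n d) :
    IsCircColoring G (d / n) (fun v => (f v : ℝ) / n) := by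
  intro u v huv m
  obtain ⟨-, h₁, h₂⟩ := f.map_adj huv
  have hn : 0 < n := (f u).pos
  have hnR : (0 : ℝ) < n := by exact_mod_cast hn
  have hint : (d : ℤ) ≤ |(f u : ℤ) - f v - m * n| := by
    have hu := (f u).isLt
    have hv := (f v).isLt
    rcases lt_trichotomy m 0 with hm | rfl | hm
    · have : (n : ℤ) ≤ -m * n := le_mul_of_one_le_left (by omega) (by omega)
      refine le_abs.2 (Or.inl ?_)
      linarith [neg_abs_le ((f u : ℤ) - f v)]
    · simpa using h₁
    · have : (n : ℤ) ≤ m * n := le_mul_of_one_le_left (by omega) (by omega)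
      refine le_abs.2 (Or.inr ?_)
      linarith [le_abs_self ((f u : ℤ) - f v)]
  rw [show (f u : ℝ) / n - (f v : ℝ) / n - m = (((f u : ℤ) - f v - m * n : ℤ) : ℝ) / n by
      push_cast; field_simp, abs_div, abs_of_pos hnR, div_le_div_iff_of_pos_right hnR]
  exact_mod_cast hint

/-- Rounding `n * c v` down to an integer turns a circular colouring with gap `d / n` into a
homomorphism to `K_{n/d}`. -/
lemma IsCircColoring.nonempty_hom {c : V → ℝ} (hn : 0 < n) (hd : 0 < d)
    (hc : IsCircColoring G (d / n) c) : Nonempty (G →g circK n d) := by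
  have hnR : (0 : ℝ) < n := by exact_mod_cast hn
  have hnZ : (0 : ℤ) < n := by exact_mod_cast hn
  have hcol : ∀ v, 0 ≤ ⌊n * c v⌋ % n ∧ ⌊n * c v⌋ % n < n := fun v =>
    ⟨Int.emod_nonneg _ hnZ.ne', Int.emod_lt_of_pos _ hnZ⟩
  refine ⟨⟨fun v => ⟨(⌊n * c v⌋ % n).toNat, by have := hcol v; omega⟩, fun {u v} huv => ?_⟩⟩
  rw [circK_adj_iff_emod hd]
  simp only [Int.toNat_of_nonneg (hcol _).1, ← Int.sub_emod]
  set p := ⌊n * c u⌋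
  set q := ⌊n * c v⌋
  set r := (p - q) % n
  set t := (p - q) / n
  have hr : 0 ≤ r ∧ r < n := ⟨Int.emod_nonneg _ hnZ.ne', Int.emod_lt_of_pos _ hnZ⟩
  have hpq : (p : ℝ) - q = r + t * n := by exact_mod_cast (Int.emod_add_ediv_mul (p - q) n).symm
  have hgap : ∀ m : ℤ, (d : ℝ) ≤ |n * c u - n * c v - m * n| := fun m => by
    have := hc huv m
    rw [div_le_iff₀ hnR] at this
    rwa [show n * c u - n * c v - m * n = (c u - c v - m) * n by ring, abs_mul,
      abs_of_pos hnR]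
  have hpu := Int.floor_le (n * c u)
  have hpu' := Int.lt_floor_add_one (n * c u)
  have hqv := Int.floor_le (n * c v)
  have hqv' := Int.lt_floor_add_one (n * c v)
  have hrR : (0 : ℝ) ≤ r ∧ (r : ℝ) + 1 ≤ n := by
    constructor <;> [exact_mod_cast hr.1; exact_mod_cast (show r + 1 ≤ n by omega)]
  have hd1 : (1 : ℝ) ≤ d := by exact_mod_cast hd
  -- `n c u - n c v - t n` lies within `1` of `r` and at distance `≥ d` from both `0` and `n`.
  have hlow : (d : ℝ) < r + 1 := by
    rcases le_abs.1 (hgap t) with h | h <;> linarith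
  have hhigh : (r : ℝ) < n - d + 1 := by
    have := hgap (t + 1)
    push_cast at this
    rcases le_abs.1 this with h | h <;> linarith
  have hlowZ : (d : ℤ) < r + 1 := by exact_mod_cast hlow
  have hhighZ : r < (n : ℤ) - d + 1 := by exact_mod_cast hhigh
  omega

/-- By compactness of `[0, 1] ^ V`, the infimum defining `circChrom G` is attained. -/
theorem nonempty_hom_circK_of_circChrom_eq (hn : 0 < n) (hd : 0 < d)
    (hc : circChrom G = n / d) : Nonempty (G →g circK n d) := by
  have hnR : (0 : ℝ) < n := by exact_mod_cast hn
  have hdR : (0 : ℝ) < d := by exact_mod_cast hd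
  let K : Set (V → ℝ) := Set.univ.pi fun _ => Set.Icc 0 1
  let C : Set.Iio ((d : ℝ) / n) → Set (V → ℝ) := fun s => K ∩ {c | IsCircColoring G s c}
  have hne : ∀ s, (C s).Nonempty := by
    rintro ⟨s, hs⟩
    by_cases hs0 : s ≤ 0
    · exact ⟨0, fun _ _ => by simp, fun _ _ _ _ => hs0.trans (abs_nonneg _)⟩
    have hlt : circChrom G < 1 / s := by
      rw [hc, lt_one_div (by positivity) (by linarith), one_div_div]
      exact hs
    obtain ⟨N, D, hD, hDN, ⟨f⟩, hND⟩ :=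
      exists_hom_circK_of_circChrom_lt (by rw [hc]; positivity) hlt
    have hN : (0 : ℝ) < N := by exact_mod_cast hD.trans_le hDN
    refine ⟨fun v => (f v : ℝ) / N, fun v _ => ⟨by positivity, ?_⟩,
      (isCircColoring_of_hom f).mono ?_⟩
    · rw [div_le_one hN]
      exact_mod_cast (f v).isLt.le
    · rw [lt_one_div (by positivity) (by linarith), one_div_div] at hND
      exact hND.le
  have hdir : Directed (· ⊇ ·) C := by
    intro s t
    rcases le_total s.1 t.1 with h | h
    · exact ⟨t, fun c hc => ⟨hc.1, hc.2.mono h⟩, le_rfl⟩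
    · exact ⟨s, le_rfl, fun c hc => ⟨hc.1, hc.2.mono h⟩⟩
  have hK : IsCompact K := isCompact_univ_pi fun _ => isCompact_Icc
  have hclosed : ∀ s, IsClosed (C s) := fun s =>
    (isClosed_set_pi fun _ _ => isClosed_Icc).inter (isClosed_setOf_isCircColoring s)
  have : Nonempty (Set.Iio ((d : ℝ) / n)) := Set.nonempty_Iio.to_subtype
  obtain ⟨c, hc⟩ := IsCompact.nonempty_iInter_of_directed_nonempty_isCompact_isClosed C hdir
    hne (fun s => hK.inter_right (isClosed_setOf_isCircColoring _)) hclosed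
  refine IsCircColoring.nonempty_hom (c := c) hn hd fun u v huv m => ?_
  refine le_of_forall_lt_imp_le_of_dense fun s hs => ?_
  exact (Set.mem_iInter.1 hc ⟨s, hs⟩).2 huv m

/-- The refined colour of `v` is `n * f v + ε (f v)`; `ε` only matters on edges whose colours
differ by exactly `d`, where the gap in `K_{n/d}` is tight. -/
lemma nonempty_hom_circK_mul_of_lift (hd : 0 < d) (h2d : 2 * d < n) (f : G →g circK n d)
    (ε : Fin n → ℕ) (hε : ∀ x, ε x < n)
    (hmono : ∀ ⦃u v⦄, G.Adj u v → (f v : ℤ) ≡ f u + d [ZMOD n] → ε (f u) < ε (f v)) :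
    Nonempty (G →g circK (n * n) (n * d + 1)) := by
  have hlt : ∀ x : Fin n, n * x + ε x < n * n := fun x => by
    have := x.isLt
    have := hε x
    nlinarith
  refine ⟨⟨fun v => ⟨n * f v + ε (f v), hlt (f v)⟩, fun {u v} huv => ?_⟩⟩
  have hadj := f.map_adj huv
  rw [circK_adj_iff_emod hd] at hadj
  rw [circK_adj_iff_emod (Nat.succ_pos _)]
  push_cast
  have hεu := hε (f u)
  have hεv := hε (f v)
  have h2dZ : (n : ℤ) * (2 * d + 1) ≤ n * n := by exact_mod_cast Nat.mul_le_mul_left n h2d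
  set x : ℤ := ((f u : ℕ) : ℤ)
  set y : ℤ := ((f v : ℕ) : ℤ)
  set δ := (x - y) % n
  set t := (x - y) / n
  have hxy : x - y = δ + t * n := (Int.emod_add_ediv_mul _ _).symm
  have hbounds : (n : ℤ) * d + 1 ≤ n * δ + ε (f u) - ε (f v) ∧
      n * δ + ε (f u) - ε (f v) ≤ n * n - (n * d + 1) := by
    rcases hadj.1.eq_or_lt with hδ | hδ
    · have := hmono huv.symm (Int.modEq_iff_dvd.2 ⟨-t, by linear_combination hδ - hxy⟩)
      rw [← hδ]
      constructor <;> nlinarith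
    rcases hadj.2.eq_or_lt with hδ' | hδ'
    · have := hmono huv (Int.modEq_iff_dvd.2 ⟨t + 1, by linear_combination hxy + hδ'⟩)
      rw [hδ']
      constructor <;> nlinarith
    constructor <;> nlinarith
  rw [show n * x + ε (f u) - (n * y + ε (f v)) = n * δ + ε (f u) - ε (f v) + t * (n * n) by
    linear_combination n * hxy, Int.add_mul_emod_self_right, Int.emod_eq_of_lt (by nlinarith)
    (by nlinarith)]
  exact hbounds

theorem exists_tight_edge (hcop : n.Coprime d) (hd : 0 < d) (h2d : 2 * d < n)
    (f : G →g circK n d) (hc : (n : ℝ) / d ≤ circChrom G) (b : ℤ) :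
    ∃ u v, G.Adj u v ∧ (f u : ℤ) ≡ b [ZMOD n] ∧ (f v : ℤ) ≡ b + d [ZMOD n] := by
  by_contra! hb
  have : NeZero n := ⟨by omega⟩
  have hinv : (d : ZMod n) * (d : ZMod n)⁻¹ = 1 := ZMod.coe_mul_inv_eq_one d hcop.symm
  -- `z x = (x - b) / d` in `ℤ / n`, so `z - 1` takes the values `0, 1, …, n - 1` along
  -- `b + d, b + 2d, …, b`.
  let z : Fin n → ZMod n := fun x => ((x : ℤ) - b : ℤ) * (d : ZMod n)⁻¹
  have hmono : ∀ ⦃u v⦄, G.Adj u v → (f v : ℤ) ≡ f u + d [ZMOD n] →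
      (z (f u) - 1).val < (z (f v) - 1).val := by
    intro u v huv hfv
    have hz : z (f v) - 1 = z (f u) := by
      have := (ZMod.intCast_eq_intCast_iff _ _ _).2 hfv
      push_cast at this
      simp only [z]
      push_cast
      rw [this]
      linear_combination hinv
    have hz0 : z (f u) ≠ 0 := by
      intro h0
      have hu : ((f u : ℤ) : ZMod n) = (b : ZMod n) := by
        simp only [z] at h0
        push_cast at h0 ⊢
        linear_combination (d : ZMod n) * h0 - (((f u : ℕ) : ZMod n) - b) * hinv
      have hu := (ZMod.intCast_eq_intCast_iff _ _ _).1 hu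
      exact hb u v huv hu (hfv.trans (hu.add_right _))
    rw [hz]
    exact ZMod.val_sub_one_lt hz0
  obtain ⟨g⟩ :=
    nonempty_hom_circK_mul_of_lift hd h2d f (fun x => (z x - 1).val) (fun _ => ZMod.val_lt _) hmono
  have hle := circChrom_le_of_hom g (Nat.succ_pos _) (by nlinarith)
  have hlt : ((n * n : ℕ) : ℝ) / ((n * d + 1 : ℕ) : ℝ) < n / d := by
    have : (0 : ℝ) < n := by exact_mod_cast (show 0 < n by omega)
    rw [div_lt_div_iff₀ (by positivity) (by exact_mod_cast hd)]
    push_cast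
    nlinarith
  linarith

lemma IsIndep.mono_s11 {S T : Set V} (hT : IsIndep G T) (h : S ⊆ T) : IsIndep G S :=
  fun _ hu _ hv => hT (h hu) (h hv)

lemma freeIndep_of_adj [Finite V] {S : Set V} {u v : V} (hu : IsIndep G (insert u S))
    (hv : IsIndep G (insert v S)) (huv : G.Adj u v) : FreeIndep G S := by
  obtain ⟨M₁, hsub₁, hM₁⟩ := Finite.exists_le_maximal hu
  obtain ⟨M₂, hsub₂, hM₂⟩ := Finite.exists_le_maximal hv
  refine ⟨hu.mono_s11 (Set.subset_insert _ _), M₁, M₂, fun h => ?_,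
    (Set.subset_insert _ _).trans hsub₁, (Set.subset_insert _ _).trans hsub₂, hM₁, hM₂⟩
  exact hM₁.prop (hsub₁ (Set.mem_insert _ _)) (h ▸ hsub₂ (Set.mem_insert _ _)) huv

lemma freeChrom_le_card_image [Fintype V] [DecidableEq V] {ι : Type*} [DecidableEq ι]
    (g : V → ι) (hg : ∀ v, FreeIndep G {w | g w = g v}) :
    freeChrom V G ≤ (univ.image g).card := by
  let fiber : ι → Finset V := fun i => univ.filter (g · = i)
  calc freeChrom V G ≤ ((univ.image g).image fiber).card := sInf_le ⟨_, rfl, ?_, ?_, ?_⟩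
    _ ≤ (univ.image g).card := by exact_mod_cast card_image_le
  · simp only [mem_image, mem_univ, true_and]
    rintro _ ⟨_, ⟨v, rfl⟩, rfl⟩
    simpa [fiber] using hg v
  · intro F hF F' hF' hne
    obtain ⟨i, -, rfl⟩ := mem_image.1 hF
    obtain ⟨j, -, rfl⟩ := mem_image.1 hF'
    exact disjoint_filter.2 fun w _ hi hj => hne (congrArg fiber (hi.symm.trans hj))
  · exact eq_univ_iff_forall.2 fun w => mem_sup.2
      ⟨fiber (g w), mem_image_of_mem _ (mem_image_of_mem _ (mem_univ _)), by simp [fiber]⟩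

/-- If the colour `s - 1` starts a tight edge `uv`, the block of colours `s, …, s + d - 2` stays
inside an arc of `d` colours after adding `u` (arc from `s - 1`) or `v` (arc from `s`). -/
lemma freeIndep_preimage_block (f : G →g circK n d) (hd : 2 ≤ d)
    (htight : ∀ b : ℤ, ∃ u v, G.Adj u v ∧ (f u : ℤ) ≡ b [ZMOD n] ∧ (f v : ℤ) ≡ b + d [ZMOD n])
    [Finite V] (j : ℕ) : FreeIndep G {w | (f w : ℕ) / (d - 1) = j} := by
  have hindep : ∀ b : ℤ, IsIndep G {w | ((f w : ℤ) - b) % n < d} :=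
    fun b _ hx _ hy hxy => circK_not_adj_of_emod_lt b hx hy (f.map_adj hxy)
  set s := j * (d - 1)
  have hblock : ∀ w ∈ {w | (f w : ℕ) / (d - 1) = j}, s ≤ f w ∧ (f w : ℕ) + 2 ≤ s + d := by
    intro w hw
    rw [Set.mem_ofPred_eq, Nat.div_eq_iff (by omega)] at hw
    omega
  obtain ⟨u, v, huv, hu, hv⟩ := htight (s - 1)
  refine freeIndep_of_adj ((hindep (s - 1)).mono_s11 ?_) ((hindep s).mono_s11 ?_) huv
  · rintro w (rfl | hw)
    · exact Int.emod_lt_of_modEq (y := 0) (by simpa using hu.sub_right (s - 1)) le_rfl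
        (by omega)
    · have := hblock w hw
      exact Int.emod_lt_of_modEq Int.ModEq.rfl (by omega) (by omega)
  · rintro w (rfl | hw)
    · exact Int.emod_lt_of_modEq (y := d - 1) (by convert hv.sub_right s using 1; ring)
        (by omega) (by omega)
    · have := hblock w hw
      exact Int.emod_lt_of_modEq Int.ModEq.rfl (by omega) (by omega)

lemma card_image_div_le [Fintype V] (f : V → Fin n) (e : ℕ) :
    (univ.image fun w => (f w : ℕ) / e).card ≤ (n - 1) / e + 1 :=
  calc _ ≤ (range ((n - 1) / e + 1)).card := card_le_card fun i hi => by
          obtain ⟨w, -, rfl⟩ := mem_image.1 hi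
          have := (f w).isLt
          exact mem_range.2 (Nat.lt_succ_of_le (Nat.div_le_div_right (by omega)))
    _ = _ := card_range _

lemma exists_adj_of_circChrom_eq (hd : 2 ≤ d) (hcop : n.Coprime d)
    (hc : circChrom G = n / d) : ∃ u v, G.Adj u v := by
  by_contra! h
  rw [circChrom_eq_one_of_forall_not_adj h, eq_div_iff (by positivity), one_mul] at hc
  have : n = d := by exact_mod_cast hc.symm
  rw [this, Nat.coprime_self] at hcop
  omega

lemma lt_mul_of_circChrom_eq [Nonempty V] {k : ℕ} (hd : 2 ≤ d) (hcop : n.Coprime d)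
    (hc : circChrom G = n / d) (hk : G.Colorable k) : n < k * d := by
  have hle := hc ▸ circChrom_le_of_colorable hk
  rw [div_le_iff₀ (by positivity)] at hle
  refine (show n ≤ k * d by exact_mod_cast hle).lt_of_ne ?_
  rintro rfl
  exact absurd ((Nat.coprime_self _).1 hcop.coprime_mul_left) (by omega)

end

theorem freeChrom_le_of_circChrom_ne_chrom {V : Type*} [Fintype V] [DecidableEq V]
    (G : SimpleGraph V) (n d : ℕ) (hd : 2 ≤ d) (hgcd : Nat.gcd n d = 1)
    (hc : circChrom G = (n : ℝ) / (d : ℝ)) :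
    freeChrom V G ≤ 2 * G.chromaticNumber - 1 := by
  have hn : 0 < n := Nat.pos_of_ne_zero fun h => by simp [h] at hgcd; omega
  obtain ⟨u, v, huv⟩ := exists_adj_of_circChrom_eq hd hgcd hc
  have : Nonempty V := ⟨u⟩
  obtain ⟨f⟩ := nonempty_hom_circK_of_circChrom_eq hn (by omega) hc
  have h2d : 2 * d < n := (two_mul_le_of_circK_adj (f.map_adj huv)).lt_of_ne fun h => by
    simp [← h] at hgcd
    omega
  have htight := exists_tight_edge hgcd (by omega) h2d f hc.ge
  set k := G.chromaticNumber.toNat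
  have hk : G.chromaticNumber = k := (ENat.natCast_toNat
    (SimpleGraph.chromaticNumber_ne_top_iff_exists.2 ⟨_, G.colorable_of_fintype⟩)).symm
  have hnk := lt_mul_of_circChrom_eq hd hgcd hc G.colorable_chromaticNumber_of_fintype
  calc freeChrom V G ≤ (univ.image fun w => (f w : ℕ) / (d - 1)).card :=
        freeChrom_le_card_image _ fun w => freeIndep_preimage_block f hd htight _
    _ ≤ ((2 * k - 1 : ℕ) : ℕ∞) := by
        exact_mod_cast (card_image_div_le f (d - 1)).trans (Nat.sub_one_div_sub_one_lt hd hnk)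
    _ = 2 * G.chromaticNumber - 1 := by
        rw [hk, ENat.natCast_sub]
        norm_num
end

section
/- Let X = (x_1,...,x_n) ∈ {-,0,+}^n. If alt(X) ≥ s(k-1) + 2 for an even positive integer s, then the set X⁺ = {i : x_i = +} contains a 2-stable subset of [n] of size at least (s/2)(k-1) + 1, and so does X⁻. -/
/-- `l` is (the index list of) an alternating subsequence of the sign vector `x`:
the indices are increasing, all the corresponding coordinates are nonzero, and
consecutive coordinates have different signs. -/
def IsAltSubseq {n : ℕ} (x : Fin n → SignType) (l : List (Fin n)) : Prop :=
  l.Chain' (· < ·) ∧ (∀ i ∈ l, x i ≠ 0) ∧ l.Chain' (fun i j => x i ≠ x j)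

/-- A subset `T` of the circularly ordered set `{0,…,n-1}` is `s`-stable if any two
distinct elements `i < j` of `T` satisfy `s ≤ j - i ≤ n - s`. -/
def IsStableFin (n s : ℕ) (T : Finset (Fin n)) : Prop :=
  ∀ i ∈ T, ∀ j ∈ T, (i : ℕ) < (j : ℕ) → s ≤ (j : ℕ) - (i : ℕ) ∧ (j : ℕ) - (i : ℕ) ≤ n - s

/-!
Write `l` for an alternating subsequence of even length `2m` and fix a sign `σ`. Along `l` the
signs alternate, so exactly `m` entries of `l` carry the sign `σ`, and `l` starts and ends with
opposite signs. The entries of sign `σ` form the required set: two of them at consecutive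
positions `i, i + 1` of `[n]` would be consecutive in `l` and hence of opposite signs, and two of
them at the positions `0` and `n - 1` would be the first and last entries of `l`.
-/

theorem SignType.eq_of_ne_of_ne {a b c : SignType} (ha : a ≠ 0) (hb : b ≠ 0) (hc : c ≠ 0)
    (hab : a ≠ b) (hbc : b ≠ c) : a = c := by
  cases a <;> cases b <;> cases c <;> simp_all

namespace List

theorem count_eq_half_of_isChain_ne {m : List SignType} (h0 : ∀ a ∈ m, a ≠ 0)
    (hm : m.IsChain (· ≠ ·)) (he : Even m.length) {σ : SignType} (hσ : σ ≠ 0) :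
    m.count σ = m.length / 2 := by
  match m, h0, hm, he with
  | [], _, _, _ => simp
  | [_], _, _, he => simp at he
  | a :: b :: t, h0, hm, he =>
    have hpair : (a :: b :: t).count σ = t.count σ + 1 := by
      have ha := h0 a (by simp)
      have hb := h0 b (by simp)
      have hab := (isChain_cons_cons.mp hm).1
      simp only [count_cons, beq_iff_eq]
      cases a <;> cases b <;> cases σ <;> simp_all
    have ih := count_eq_half_of_isChain_ne (m := t) (fun c hc => h0 c (by simp [hc]))
      hm.tail.tail (by simpa [Nat.even_add_one] using he) hσ
    rw [hpair, ih]
    simp only [length_cons]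
    omega

theorem head_ne_getLast_of_isChain_ne {m : List SignType} (h0 : ∀ a ∈ m, a ≠ 0)
    (hm : m.IsChain (· ≠ ·)) (he : Even m.length) (hne : m ≠ []) :
    m.head hne ≠ m.getLast hne := by
  match m, h0, hm, he with
  | [_], _, _, he => simp at he
  | [_, _], _, hm, _ => simpa using hm
  | a :: b :: c :: t, h0, hm, he =>
    have hac : a = c := SignType.eq_of_ne_of_ne (h0 a (by simp)) (h0 b (by simp))
      (h0 c (by simp)) (isChain_cons_cons.mp hm).1 (isChain_cons_cons.mp hm.tail).1
    have ih := head_ne_getLast_of_isChain_ne (m := c :: t) (fun d hd => h0 d (by simp_all))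
      hm.tail.tail (by simpa [Nat.even_add_one] using he) (cons_ne_nil c t)
    simpa [hac] using ih

theorem IsChain.rel_of_covBy {α : Type*} [Preorder α] {R : α → α → Prop} {l : List α}
    (hs : l.Pairwise (· < ·)) (hc : l.IsChain R) {a b : α} (ha : a ∈ l) (hb : b ∈ l)
    (hab : a ⋖ b) : R a b := by
  induction l with
  | nil => simp at ha
  | cons c t ih =>
    rw [pairwise_cons] at hs
    rcases mem_cons.mp ha with rfl | hat
    · obtain rfl | hbt := mem_cons.mp hb
      · exact absurd hab.lt (lt_irrefl _)
      obtain ⟨d, t, rfl⟩ := exists_cons_of_ne_nil (ne_nil_of_mem hbt)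
      obtain rfl | hbt := mem_cons.mp hbt
      · exact (isChain_cons_cons.mp hc).1
      · exact absurd ((pairwise_cons.mp hs.2).1 b hbt) (hab.2 (hs.1 d mem_cons_self))
    · obtain rfl | hbt := mem_cons.mp hb
      · exact absurd (hs.1 a hat) hab.lt.asymm
      · exact ih hs.2 hc.tail hat hbt

end List

namespace IsAltSubseq

variable {n : ℕ} {x : Fin n → SignType} {l : List (Fin n)}

theorem pairwise_lt (hl : IsAltSubseq x l) : l.Pairwise (· < ·) :=
  List.isChain_iff_pairwise.mp hl.1

theorem map_ne_zero (hl : IsAltSubseq x l) : ∀ a ∈ l.map x, a ≠ 0 := by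
  simpa using hl.2.1

theorem isChain_map (hl : IsAltSubseq x l) : (l.map x).IsChain (· ≠ ·) :=
  (List.isChain_map x).mpr hl.2.2

theorem card_filter_eq (hl : IsAltSubseq x l) {m : ℕ} (hlen : l.length = 2 * m)
    {σ : SignType} (hσ : σ ≠ 0) : {i ∈ l.toFinset | x i = σ}.card = m := by
  have hcount := List.count_eq_half_of_isChain_ne hl.map_ne_zero hl.isChain_map
    (by simp [hlen]) hσ
  rw [List.count, List.countP_map, List.length_map, hlen, Nat.mul_div_cancel_left m two_pos,
    List.countP_eq_length_filter] at hcount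
  have hfilter : {i ∈ l.toFinset | x i = σ} = (l.filter (x · == σ)).toFinset := by
    ext; simp
  rw [hfilter, List.toFinset_card_of_nodup ((hl.pairwise_lt.imp ne_of_lt).filter _)]
  exact hcount

theorem isStableFin_two (hl : IsAltSubseq x l) (he : Even l.length) (σ : SignType) :
    IsStableFin n 2 {i ∈ l.toFinset | x i = σ} := by
  intro i hi j hj hij
  simp only [Finset.mem_filter, List.mem_toFinset] at hi hj
  obtain ⟨hil, hxi⟩ := hi
  obtain ⟨hjl, hxj⟩ := hj
  constructor
  · by_contra hclose
    have hcov : i ⋖ j := Fin.covBy_iff.mpr (Nat.covBy_iff_add_one_eq.mpr (by omega))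
    exact List.IsChain.rel_of_covBy hl.pairwise_lt hl.2.2 hil hjl hcov (hxi.trans hxj.symm)
  · by_contra hfar
    have hne : l ≠ [] := List.ne_nil_of_mem hil
    have hhead : l.head hne = i := by
      have := (hl.pairwise_lt.imp le_of_lt).rel_head hil
      exact Fin.ext (by rw [Fin.le_def] at this; omega)
    have hlast : l.getLast hne = j := by
      have := (hl.pairwise_lt.imp le_of_lt).rel_getLast hjl
      exact Fin.ext (by rw [Fin.le_def] at this; omega)
    have hend := List.head_ne_getLast_of_isChain_ne hl.map_ne_zero hl.isChain_map
      (by simpa using he) (by simpa using hne)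
    rw [List.head_map, List.getLast_map, hhead, hlast, hxi, hxj] at hend
    exact hend rfl

theorem exists_isStableFin_two (hl : IsAltSubseq x l) {m : ℕ} (hlen : l.length = 2 * m)
    {σ : SignType} (hσ : σ ≠ 0) :
    ∃ T : Finset (Fin n), (∀ i ∈ T, x i = σ) ∧ T.card = m ∧ IsStableFin n 2 T :=
  ⟨{i ∈ l.toFinset | x i = σ}, fun _ hi => (Finset.mem_filter.mp hi).2,
    hl.card_filter_eq hlen hσ, hl.isStableFin_two (by simp [hlen]) σ⟩

end IsAltSubseq

theorem alt_big_gives_two_stable_general (n k s : ℕ) (hse : Even s)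
    (x : Fin n → SignType)
    (halt : ∃ l : List (Fin n), IsAltSubseq x l ∧ l.length = s * (k - 1) + 2) :
    (∃ T : Finset (Fin n), (∀ i ∈ T, x i = 1) ∧
        s / 2 * (k - 1) + 1 ≤ T.card ∧ IsStableFin n 2 T) ∧
      (∃ T : Finset (Fin n), (∀ i ∈ T, x i = -1) ∧
        s / 2 * (k - 1) + 1 ≤ T.card ∧ IsStableFin n 2 T) := by
  obtain ⟨l, hl, hlen⟩ := halt
  have hlen' : l.length = 2 * (s / 2 * (k - 1) + 1) := by
    rw [hlen, mul_add, ← mul_assoc, Nat.mul_div_cancel' hse.two_dvd]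
  obtain ⟨Tpos, hTpos, hcard_pos, hstable_pos⟩ := hl.exists_isStableFin_two hlen' (σ := 1) one_ne_zero
  obtain ⟨Tneg, hTneg, hcard_neg, hstable_neg⟩ := hl.exists_isStableFin_two hlen' (σ := -1) (by decide)
  exact ⟨⟨Tpos, hTpos, hcard_pos.ge, hstable_pos⟩, ⟨Tneg, hTneg, hcard_neg.ge, hstable_neg⟩⟩

theorem alt_big_gives_two_stable (n k s : ℕ) (hs : 0 < s) (hse : Even s)
    (x : Fin n → SignType)
    (halt : ∃ l : List (Fin n), IsAltSubseq x l ∧ l.length = s * (k - 1) + 2) :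
    (∃ T : Finset (Fin n), (∀ i ∈ T, x i = 1) ∧
        s / 2 * (k - 1) + 1 ≤ T.card ∧ IsStableFin n 2 T) ∧
      (∃ T : Finset (Fin n), (∀ i ∈ T, x i = -1) ∧
        s / 2 * (k - 1) + 1 ≤ T.card ∧ IsStableFin n 2 T) :=
  alt_big_gives_two_stable_general n k s hse x halt
end
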